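/- arXiv:2108.11103 — 6 statements merged into one kernel-verified Lean document; each statement's English description precedes it below -/
import Mathlib

section
/- Let (A, R) be a Rota–Baxter algebra of weight λ over a field K of characteristic zero. Define ⟦x, y⟧ := λ(xy − yx) and x ▷ y := R(x)y − yR(x) for x, y ∈ A, and let a_▷(x, y, z) := x ▷ (y ▷ z) − (x ▷ y) ▷ z denote the associator of ▷. Then ⟦x, y⟧ ▷ z = a_▷(x, y, z) − a_▷(y, x, z) for all x, y, z ∈ A; hence (A, ⟦·,·⟧, ▷) is a post-Lie algebra. -/
/-- In a Rota–Baxter algebra `(A, R)` of weight `lam` over a field `K` of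
characteristic zero, with `⟦x, y⟧ := lam • (x*y - y*x)` and `x ▷ y := R(x)*y - y*R(x)`, one has
`⟦x, y⟧ ▷ z = a_▷(x, y, z) - a_▷(y, x, z)` for all `x, y, z`, where `a_▷` is the associator of
`▷`; hence `(A, ⟦·,·⟧, ▷)` is a post-Lie algebra. -/
theorem rota_baxter_post_lie_second_axiom {K A : Type*} [Field K] [CharZero K]
    [Ring A] [Algebra K A] (lam : K) (R : A →ₗ[K] A)
    (hR : ∀ x y : A, R x * R y = R (R x * y + x * R y + lam • (x * y))) :
    let br : A → A → A := fun x y => lam • (x * y - y * x)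
    let trd : A → A → A := fun x y => R x * y - y * R x
    let assoc : A → A → A → A := fun x y z => trd x (trd y z) - trd (trd x y) z
    ∀ x y z : A, trd (br x y) z = assoc x y z - assoc y x z := by
  intro br trd assoc x y z
  simp only [br, trd, assoc]
  have h1 : R (R x * y) = R x * R y - R (x * R y) - lam • R (x * y) := by
    rw [hR x y, map_add, map_add, map_smul]; abel
  have h2 : R (R y * x) = R y * R x - R (y * R x) - lam • R (y * x) := by
    rw [hR y x, map_add, map_add, map_smul]; abel
  simp only [map_sub, map_smul, h1, h2]
  simp only [smul_sub, smul_add, sub_mul, mul_sub, smul_mul_assoc, mul_smul_comm]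
  noncomm_ring
end

section
/- Let (L, [·,·], ▷) be a post-Lie algebra over a field K of characteristic zero. Define x ▶ y := x ▷ y + [x, y] and {x, y} := −[x, y]. Then (L, {·,·}, ▶) is again a post-Lie algebra, i.e., {·,·} is a Lie bracket, x ▶ {y, z} = {x ▶ y, z} + {y, x ▶ z}, and {x, y} ▶ z = a_▶(x, y, z) − a_▶(y, x, z) for all x, y, z ∈ L, where a_▶(x, y, z) := x ▶ (y ▶ z) − (x ▶ y) ▶ z. Moreover, the two post-Lie structures share the same double Lie bracket: x ▷ y − y ▷ x + [x, y] = x ▶ y − y ▶ x − [x, y] for all x, y ∈ L. -/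
/-- If `(L, [·,·], ▷)` is a post-Lie algebra over a field `K` of characteristic
zero, then with `x ▶ y := x ▷ y + [x, y]` and `{x, y} := -[x, y]`, the triple `(L, {·,·}, ▶)`
is again a post-Lie algebra, and the two post-Lie structures share the same double Lie bracket:
`x ▷ y - y ▷ x + [x, y] = x ▶ y - y ▶ x - [x, y]`. -/
theorem post_lie_opposite_structure {K L : Type*} [Field K] [CharZero K]
    [LieRing L] [LieAlgebra K L] (t : L →ₗ[K] L →ₗ[K] L)
    (h1 : ∀ x y z : L, t x ⁅y, z⁆ = ⁅t x y, z⁆ + ⁅y, t x z⁆)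
    (h2 : ∀ x y z : L, t ⁅x, y⁆ z =
      (t x (t y z) - t (t x y) z) - (t y (t x z) - t (t y x) z)) :
    let s : L → L → L := fun x y => t x y + ⁅x, y⁆       -- x ▶ y
    let nb : L → L → L := fun x y => -⁅x, y⁆              -- {x, y}
    let assoc : L → L → L → L := fun x y z => s x (s y z) - s (s x y) z
    -- {·,·} is a Lie bracket: bilinear, alternating, Jacobi
    (∀ (a : K) (x x' y : L), nb (a • x + x') y = a • nb x y + nb x' y) ∧
    (∀ (a : K) (x y y' : L), nb x (a • y + y') = a • nb x y + nb x y') ∧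
    (∀ x : L, nb x x = 0) ∧
    (∀ x y z : L, nb x (nb y z) + nb y (nb z x) + nb z (nb x y) = 0) ∧
    -- first post-Lie axiom for (nb, ▶)
    (∀ x y z : L, s x (nb y z) = nb (s x y) z + nb y (s x z)) ∧
    -- second post-Lie axiom for (nb, ▶)
    (∀ x y z : L, s (nb x y) z = assoc x y z - assoc y x z) ∧
    -- shared double Lie bracket
    (∀ x y : L, t x y - t y x + ⁅x, y⁆ = s x y - s y x - ⁅x, y⁆) := by
  intro s nb assoc
  refine ⟨?_, ?_, ?_, ?_, ?_, ?_, ?_⟩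
  · intro a x x' y; simp [nb]
  · intro a x y y'; simp [nb]
  · intro x; simp [nb]
  · intro x y z; simp only [nb, lie_neg, neg_neg]
    exact lie_jacobi x y z
  · intro x y z
    simp only [s, nb, map_neg, h1, lie_neg, add_lie, lie_add, neg_add, lie_lie]
    abel
  · intro x y z
    have hyx : t ⁅y, x⁆ z = - t ⁅x, y⁆ z := by
      rw [← lie_skew x y, map_neg]; simp
    simp only [s, nb, assoc, map_neg, map_add, LinearMap.add_apply,
      LinearMap.neg_apply, h1, neg_lie, lie_add, add_lie, lie_lie]
    rw [hyx, h2]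
    abel
  · intro x y
    simp only [s]
    rw [← lie_skew y x]
    abel
end

section
/- Let A be a complete filtered algebra over a field K of characteristic zero, and let R : A → A be a K-linear map preserving the filtration, i.e., R(Aₙ) ⊆ Aₙ for all n. Set R̃ := id_A − R. Then there exists a unique map χ : A₁ → A₁ such that (χ − id)(Aₙ) ⊆ A₂ₙ for all n ≥ 1 and exp(R(χ(x)))·exp(R̃(χ(x))) = exp(x) for all x ∈ A₁ (equivalently, BCH(R(χ(x)), R̃(χ(x))) = x, where BCH(u, v) := log(exp(u)·exp(v))). -/
open scoped Classical

/-- A complete filtered algebra over a field `K` of characteristic zero: an associative unital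
`K`-algebra `A` with a decreasing filtration `A = F 0 ⊇ F 1 ⊇ ⋯` by (two-sided, here
`K`-submodules closed under multiplication in the filtered sense) ideals, which is separated
and complete: every series `Σ aₙ` with `aₙ ∈ F n` converges (has a limit in the filtration
topology). -/
structure CompleteFilteredAlgebra (K A : Type*) [Field K] [CharZero K] [Ring A] [Algebra K A] where
  F : ℕ → Submodule K A
  F_zero : F 0 = ⊤
  F_succ_le : ∀ n : ℕ, F (n + 1) ≤ F n
  F_mul : ∀ m n : ℕ, ∀ x ∈ F m, ∀ y ∈ F n, x * y ∈ F (m + n)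
  F_sep : ∀ x : A, (∀ n : ℕ, x ∈ F n) → x = 0
  F_complete : ∀ a : ℕ → A, (∀ n : ℕ, a n ∈ F n) →
    ∃ s : A, ∀ N : ℕ, s - ∑ n ∈ Finset.range N, a n ∈ F N

namespace CompleteFilteredAlgebra

variable {K A : Type*} [Field K] [CharZero K] [Ring A] [Algebra K A]

/-- The exponential `exp x = Σ_{n≥0} xⁿ/n!`, defined (as the limit of its partial sums) for
every `x ∈ F 1`; junk value `0` elsewhere. -/
noncomputable def exp (FA : CompleteFilteredAlgebra K A) (x : A) : A :=
  if h : ∀ n : ℕ, ((n.factorial : K)⁻¹ • x ^ n) ∈ FA.F n then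
    Classical.choose (FA.F_complete _ h)
  else 0

/-- The logarithm `log (1 + y) = Σ_{n≥1} (-1)^(n-1) yⁿ/n`, defined (as the limit of its partial
sums) whenever the argument lies in `1 + F 1`; junk value `0` elsewhere. (The `n = 0` term of
the defining sequence is `0` since `1/0 = 0` in `K`.) -/
noncomputable def log (FA : CompleteFilteredAlgebra K A) (y : A) : A :=
  if h : ∀ n : ℕ, ((((-1 : K) ^ (n - 1)) / (n : K)) • (y - 1) ^ n) ∈ FA.F n then
    Classical.choose (FA.F_complete _ h)
  else 0

end CompleteFilteredAlgebra

namespace CompleteFilteredAlgebra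

variable {K A : Type*} [Field K] [CharZero K] [Ring A] [Algebra K A]
variable (FA : CompleteFilteredAlgebra K A)

theorem F_antitone : Antitone FA.F := antitone_nat_of_succ_le FA.F_succ_le

theorem F_le {m n : ℕ} (h : m ≤ n) : FA.F n ≤ FA.F m := FA.F_antitone h

theorem pow_mem {x : A} {n : ℕ} (hx : x ∈ FA.F n) (k : ℕ) : x ^ k ∈ FA.F (k * n) := by
  induction k with
  | zero => simpa [FA.F_zero] using Submodule.mem_top
  | succ k ih =>
      have h := FA.F_mul (k * n) n _ ih _ hx
      rw [pow_succ]
      simpa [Nat.succ_mul] using h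

theorem pow_mem_one {x : A} (hx : x ∈ FA.F 1) (k : ℕ) : x ^ k ∈ FA.F k := by
  simpa using FA.pow_mem hx k

theorem exp_spec {x : A} (hx : x ∈ FA.F 1) (N : ℕ) :
    FA.exp x - ∑ n ∈ Finset.range N, ((n.factorial : K)⁻¹ • x ^ n) ∈ FA.F N := by
  have h : ∀ n : ℕ, ((n.factorial : K)⁻¹ • x ^ n) ∈ FA.F n := fun n =>
    Submodule.smul_mem _ _ (FA.pow_mem_one hx n)
  rw [exp, dif_pos h]
  exact Classical.choose_spec (FA.F_complete _ h) N

/-- Quadratic estimate: for `x ∈ F n` (`n ≥ 1`), `exp x - 1 - x ∈ F (2n)`. -/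
theorem exp_quad {x : A} {n : ℕ} (hn : 1 ≤ n) (hx : x ∈ FA.F n) :
    FA.exp x - 1 - x ∈ FA.F (2 * n) := by
  have hx1 : x ∈ FA.F 1 := FA.F_le hn hx
  have h1 := FA.exp_spec hx1 (2 * n)
  have hsplit : ∑ k ∈ Finset.range (2 * n), ((k.factorial : K)⁻¹ • x ^ k)
      = 1 + x + ∑ k ∈ Finset.Ico 2 (2 * n), ((k.factorial : K)⁻¹ • x ^ k) := by
    rw [Finset.range_eq_Ico,
      ← Finset.sum_Ico_consecutive _ (by norm_num : (0:ℕ) ≤ 2) (by omega : 2 ≤ 2 * n)]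
    congr 1
    rw [← Finset.range_eq_Ico, Finset.sum_range_succ, Finset.sum_range_one]
    simp [Nat.factorial]
  have hsum : ∑ k ∈ Finset.Ico 2 (2 * n), ((k.factorial : K)⁻¹ • x ^ k) ∈ FA.F (2 * n) := by
    refine Submodule.sum_mem _ fun k hk => ?_
    rw [Finset.mem_Ico] at hk
    refine Submodule.smul_mem _ _ (FA.F_le ?_ (FA.pow_mem hx k))
    calc 2 * n ≤ k * n := Nat.mul_le_mul_right n hk.1
    _ = k * n := rfl
  have heq : FA.exp x - 1 - x
      = (FA.exp x - ∑ k ∈ Finset.range (2 * n), ((k.factorial : K)⁻¹ • x ^ k))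
        + ∑ k ∈ Finset.Ico 2 (2 * n), ((k.factorial : K)⁻¹ • x ^ k) := by
    rw [hsplit]; abel
  rw [heq]
  exact add_mem h1 hsum

theorem pow_sub_pow {u u' : A} {m : ℕ} (hu : u ∈ FA.F 1) (hu' : u' ∈ FA.F 1)
    (hd : u - u' ∈ FA.F m) (k : ℕ) : u ^ (k + 1) - u' ^ (k + 1) ∈ FA.F (k + m) := by
  induction k with
  | zero => simpa using hd
  | succ k ih =>
      have h1 : u ^ (k + 1) * (u - u') ∈ FA.F (k + 1 + m) :=
        FA.F_mul _ _ _ (FA.pow_mem_one hu (k + 1)) _ hd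
      have h2 : (u ^ (k + 1) - u' ^ (k + 1)) * u' ∈ FA.F (k + m + 1) :=
        FA.F_mul _ _ _ ih _ hu'
      have heq : u ^ (k + 1 + 1) - u' ^ (k + 1 + 1)
          = u ^ (k + 1) * (u - u') + (u ^ (k + 1) - u' ^ (k + 1)) * u' := by
        rw [pow_succ u (k + 1), pow_succ u' (k + 1)]; noncomm_ring
      rw [heq]
      exact add_mem h1 (by rwa [show k + m + 1 = k + 1 + m by ring] at h2)

/-- Lipschitz estimate: if `u ≡ u' mod F m` (`m ≥ 1`), then
`exp u - exp u' ≡ u - u' mod F (m+1)`. -/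
theorem exp_lip {u u' : A} {m : ℕ} (hm : 1 ≤ m) (hu : u ∈ FA.F 1) (hu' : u' ∈ FA.F 1)
    (hd : u - u' ∈ FA.F m) :
    FA.exp u - FA.exp u' - (u - u') ∈ FA.F (m + 1) := by
  have h1 := FA.exp_spec hu (m + 1)
  have h2 := FA.exp_spec hu' (m + 1)
  have hsum : (∑ k ∈ Finset.range (m + 1), ((k.factorial : K)⁻¹ • u ^ k))
      - (∑ k ∈ Finset.range (m + 1), ((k.factorial : K)⁻¹ • u' ^ k)) - (u - u')
      ∈ FA.F (m + 1) := by
    rw [← Finset.sum_sub_distrib]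
    have hterm : ∀ k ∈ Finset.range (m + 1),
        ((k.factorial : K)⁻¹ • u ^ k - (k.factorial : K)⁻¹ • u' ^ k)
        = (k.factorial : K)⁻¹ • (u ^ k - u' ^ k) := fun k _ => (smul_sub _ _ _).symm
    rw [Finset.sum_congr rfl hterm]
    have hsplit : ∑ k ∈ Finset.range (m + 1), ((k.factorial : K)⁻¹ • (u ^ k - u' ^ k))
        = (u - u') + ∑ k ∈ Finset.Ico 2 (m + 1), ((k.factorial : K)⁻¹ • (u ^ k - u' ^ k)) := by
      rw [Finset.range_eq_Ico,
        ← Finset.sum_Ico_consecutive _ (by norm_num : (0:ℕ) ≤ 2) (by omega : 2 ≤ m + 1)]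
      congr 1
      rw [← Finset.range_eq_Ico, Finset.sum_range_succ, Finset.sum_range_one]
      simp [Nat.factorial]
    rw [hsplit]
    have hrest : ∑ k ∈ Finset.Ico 2 (m + 1), ((k.factorial : K)⁻¹ • (u ^ k - u' ^ k))
        ∈ FA.F (m + 1) := by
      refine Submodule.sum_mem _ fun k hk => ?_
      rw [Finset.mem_Ico] at hk
      obtain ⟨j, rfl⟩ : ∃ j, k = j + 2 := ⟨k - 2, by omega⟩
      refine Submodule.smul_mem _ _ (FA.F_le (by omega : m + 1 ≤ j + 1 + m) ?_)
      exact FA.pow_sub_pow hu hu' hd (j + 1)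
    have heq : (u - u') + ∑ k ∈ Finset.Ico 2 (m + 1), ((k.factorial : K)⁻¹ • (u ^ k - u' ^ k))
        - (u - u') = ∑ k ∈ Finset.Ico 2 (m + 1), ((k.factorial : K)⁻¹ • (u ^ k - u' ^ k)) := by
      abel
    rw [heq]; exact hrest
  have heq : FA.exp u - FA.exp u' - (u - u')
      = (FA.exp u - ∑ k ∈ Finset.range (m + 1), ((k.factorial : K)⁻¹ • u ^ k))
        - (FA.exp u' - ∑ k ∈ Finset.range (m + 1), ((k.factorial : K)⁻¹ • u' ^ k))
        + ((∑ k ∈ Finset.range (m + 1), ((k.factorial : K)⁻¹ • u ^ k))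
          - (∑ k ∈ Finset.range (m + 1), ((k.factorial : K)⁻¹ • u' ^ k)) - (u - u')) := by
    abel
  rw [heq]
  exact add_mem (sub_mem h1 h2) hsum

theorem exp_sub_one {u : A} (hu : u ∈ FA.F 1) : FA.exp u - 1 ∈ FA.F 1 := by
  have h := FA.exp_quad le_rfl hu
  have heq : FA.exp u - 1 = (FA.exp u - 1 - u) + u := by abel
  rw [heq]
  exact add_mem (FA.F_le (by norm_num) h) hu

end CompleteFilteredAlgebra

section BCHAux

variable {K A : Type*} [Field K] [CharZero K] [Ring A] [Algebra K A]

/-- The BCH product map `c ↦ exp(R c) · exp(c - R c)`. -/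
noncomputable def bchP (FA : CompleteFilteredAlgebra K A) (R : A →ₗ[K] A) (c : A) : A :=
  FA.exp (R c) * FA.exp (c - R c)

variable (FA : CompleteFilteredAlgebra K A) (R : A →ₗ[K] A)
variable (hR : ∀ n : ℕ, ∀ x ∈ FA.F n, R x ∈ FA.F n)

include hR

theorem bchP_quad {c : A} {n : ℕ} (hn : 1 ≤ n) (hc : c ∈ FA.F n) :
    bchP FA R c - 1 - c ∈ FA.F (2 * n) := by
  have hu : R c ∈ FA.F n := hR n c hc
  have hv : c - R c ∈ FA.F n := sub_mem hc hu
  have ha := FA.exp_quad hn hu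
  have hb := FA.exp_quad hn hv
  have key : bchP FA R c - 1 - c
      = (R c) * (c - R c)
        + (R c) * (FA.exp (c - R c) - 1 - (c - R c))
        + (FA.exp (R c) - 1 - R c)
        + (FA.exp (R c) - 1 - R c) * (c - R c)
        + (FA.exp (R c) - 1 - R c) * (FA.exp (c - R c) - 1 - (c - R c))
        + (FA.exp (c - R c) - 1 - (c - R c)) := by
    rw [bchP]; noncomm_ring
  rw [key]
  refine add_mem (add_mem (add_mem (add_mem (add_mem ?_ ?_) ha) ?_) ?_) hb
  · exact FA.F_le (by omega) (FA.F_mul n n _ hu _ hv)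
  · exact FA.F_le (by omega) (FA.F_mul n (2 * n) _ hu _ hb)
  · exact FA.F_le (by omega) (FA.F_mul (2 * n) n _ ha _ hv)
  · exact FA.F_le (by omega) (FA.F_mul (2 * n) (2 * n) _ ha _ hb)

theorem bchP_sub {c c' : A} {m : ℕ} (hm : 1 ≤ m) (hc : c ∈ FA.F 1) (hc' : c' ∈ FA.F 1)
    (hd : c - c' ∈ FA.F m) :
    bchP FA R c - bchP FA R c' - (c - c') ∈ FA.F (m + 1) := by
  have hu : R c ∈ FA.F 1 := hR 1 c hc
  have hu' : R c' ∈ FA.F 1 := hR 1 c' hc'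
  have hv : c - R c ∈ FA.F 1 := sub_mem hc hu
  have hv' : c' - R c' ∈ FA.F 1 := sub_mem hc' hu'
  have hdu : R c - R c' ∈ FA.F m := by
    rw [← map_sub]; exact hR m _ hd
  have hdv : (c - R c) - (c' - R c') ∈ FA.F m := by
    have heq : (c - R c) - (c' - R c') = (c - c') - R (c - c') := by
      rw [map_sub]; abel
    rw [heq]; exact sub_mem hd (hR m _ hd)
  have hw := FA.exp_lip hm hu hu' hdu
  have hw' := FA.exp_lip hm hv hv' hdv
  have hz : FA.exp (c - R c) - 1 ∈ FA.F 1 := FA.exp_sub_one hv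
  have hz' : FA.exp (R c') - 1 ∈ FA.F 1 := FA.exp_sub_one hu'
  have key : bchP FA R c - bchP FA R c' - (c - c')
      = (R c - R c') * (FA.exp (c - R c) - 1)
        + (FA.exp (R c) - FA.exp (R c') - (R c - R c'))
        + (FA.exp (R c) - FA.exp (R c') - (R c - R c')) * (FA.exp (c - R c) - 1)
        + (FA.exp (R c') - 1) * ((c - R c) - (c' - R c'))
        + (FA.exp (c - R c) - FA.exp (c' - R c') - ((c - R c) - (c' - R c')))
        + (FA.exp (R c') - 1)
          * (FA.exp (c - R c) - FA.exp (c' - R c') - ((c - R c) - (c' - R c'))) := by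
    simp only [bchP]; noncomm_ring
  rw [key]
  refine add_mem (add_mem (add_mem (add_mem (add_mem ?_ hw) ?_) ?_) hw') ?_
  · exact FA.F_mul m 1 _ hdu _ hz
  · exact FA.F_le (by omega) (FA.F_mul (m + 1) 1 _ hw _ hz)
  · have := FA.F_mul 1 m _ hz' _ hdv
    rwa [show 1 + m = m + 1 by ring] at this
  · exact FA.F_le (by omega) (FA.F_mul 1 (m + 1) _ hz' _ hw')

end BCHAux

/-- The fixed-point iteration sequence for the BCH recursion. -/
noncomputable def bchSeq {K A : Type*} [Field K] [CharZero K] [Ring A] [Algebra K A]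
    (FA : CompleteFilteredAlgebra K A) (R : A →ₗ[K] A) (x : A) : ℕ → A
  | 0 => x
  | k + 1 => FA.exp x - bchP FA R (bchSeq FA R x k) + bchSeq FA R x k

/-- For a complete filtered algebra `A` over a field `K` of characteristic zero
and a filtration-preserving `K`-linear map `R`, with `R̃ := id - R`, there is a unique map
`χ : A₁ → A₁` such that `(χ - id)(Aₙ) ⊆ A₂ₙ` for all `n ≥ 1` and
`exp(R(χ x)) * exp(R̃(χ x)) = exp x` for all `x ∈ A₁`. -/
theorem bch_recursion_exists_unique {K A : Type*} [Field K] [CharZero K]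
    [Ring A] [Algebra K A] (FA : CompleteFilteredAlgebra K A) (R : A →ₗ[K] A)
    (hR : ∀ n : ℕ, ∀ x ∈ FA.F n, R x ∈ FA.F n) :
    ∃! χ : FA.F 1 → FA.F 1,
      (∀ n : ℕ, 1 ≤ n → ∀ x : FA.F 1, (x : A) ∈ FA.F n →
        ((χ x : A) - (x : A)) ∈ FA.F (2 * n)) ∧
      (∀ x : FA.F 1,
        FA.exp (R (χ x)) * FA.exp ((χ x : A) - R (χ x)) = FA.exp (x : A)) := by
  -- Uniqueness of solutions of `bchP FA R c = z` in `F 1`.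
  have Puniq : ∀ c c' : A, c ∈ FA.F 1 → c' ∈ FA.F 1 →
      bchP FA R c = bchP FA R c' → c = c' := by
    intro c c' hc hc' hP
    have key : ∀ m : ℕ, c - c' ∈ FA.F (m + 1) := by
      intro m
      induction m with
      | zero => exact sub_mem hc hc'
      | succ m ih =>
          have h := bchP_sub FA R hR (by omega : 1 ≤ m + 1) hc hc' ih
          rw [hP, sub_self, zero_sub] at h
          exact (neg_mem_iff).mp h
    have hsep : c - c' = 0 := by
      refine FA.F_sep _ fun n => ?_
      cases n with
      | zero => rw [FA.F_zero]; exact Submodule.mem_top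
      | succ n => exact key n
    exact sub_eq_zero.mp hsep
  -- Existence of a solution for each `x ∈ F 1`, with the quadratic estimate.
  have Hex : ∀ x : A, x ∈ FA.F 1 → ∃ s : A, s ∈ FA.F 1 ∧
      (∀ n : ℕ, 1 ≤ n → x ∈ FA.F n → s - x ∈ FA.F (2 * n)) ∧
      bchP FA R s = FA.exp x := by
    intro x hx
    have hseqQ : ∀ k : ℕ, bchSeq FA R x k ∈ FA.F 1 ∧
        FA.exp x - bchP FA R (bchSeq FA R x k) ∈ FA.F (k + 2) := by
      intro k
      induction k with
      | zero =>
          refine ⟨hx, ?_⟩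
          have h1 := FA.exp_quad le_rfl hx
          have h2 := bchP_quad FA R hR le_rfl hx
          have heq : FA.exp x - bchP FA R (bchSeq FA R x 0)
              = (FA.exp x - 1 - x) - (bchP FA R x - 1 - x) := by
            show FA.exp x - bchP FA R x = _
            abel
          rw [heq]
          exact sub_mem h1 h2
      | succ k ih =>
          obtain ⟨h1, h2⟩ := ih
          have hstep : bchSeq FA R x (k + 1)
              = (FA.exp x - bchP FA R (bchSeq FA R x k)) + bchSeq FA R x k := rfl
          have hmem : bchSeq FA R x (k + 1) ∈ FA.F 1 := by
            rw [hstep]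
            exact add_mem (FA.F_le (by omega) h2) h1
          refine ⟨hmem, ?_⟩
          have hdiff : bchSeq FA R x (k + 1) - bchSeq FA R x k
              = FA.exp x - bchP FA R (bchSeq FA R x k) := by rw [hstep]; abel
          have hd : bchSeq FA R x (k + 1) - bchSeq FA R x k ∈ FA.F (k + 2) := by
            rw [hdiff]; exact h2
          have hps := bchP_sub FA R hR (by omega : 1 ≤ k + 2) hmem h1 hd
          have heq : FA.exp x - bchP FA R (bchSeq FA R x (k + 1))
              = -(bchP FA R (bchSeq FA R x (k + 1)) - bchP FA R (bchSeq FA R x k)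
                - (bchSeq FA R x (k + 1) - bchSeq FA R x k)) := by
            rw [hdiff]; abel
          rw [heq]
          exact neg_mem hps
    -- the telescoping series
    set aseq : ℕ → A := fun n =>
      Nat.rec x (fun k _ => bchSeq FA R x (k + 1) - bchSeq FA R x k) n with haseq
    have ha : ∀ n : ℕ, aseq n ∈ FA.F n := by
      intro n
      cases n with
      | zero => rw [FA.F_zero]; exact Submodule.mem_top
      | succ n =>
          have h2 := (hseqQ n).2
          have hdiff : aseq (n + 1) = bchSeq FA R x (n + 1) - bchSeq FA R x n := rfl
          have hstep : bchSeq FA R x (n + 1)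
              = (FA.exp x - bchP FA R (bchSeq FA R x n)) + bchSeq FA R x n := rfl
          have : aseq (n + 1) = FA.exp x - bchP FA R (bchSeq FA R x n) := by
            rw [hdiff, hstep]; abel
          rw [this]
          exact FA.F_le (by omega) h2
    have hsum : ∀ N : ℕ, ∑ n ∈ Finset.range (N + 1), aseq n = bchSeq FA R x N := by
      intro N
      induction N with
      | zero => simp [haseq]; rfl
      | succ N ih =>
          rw [Finset.sum_range_succ, ih]
          show bchSeq FA R x N + (bchSeq FA R x (N + 1) - bchSeq FA R x N) = _
          abel
    obtain ⟨s, hs⟩ := FA.F_complete aseq ha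
    have hsN : ∀ N : ℕ, s - bchSeq FA R x N ∈ FA.F (N + 1) := by
      intro N
      have := hs (N + 1)
      rwa [hsum N] at this
    have hs1 : s ∈ FA.F 1 := by
      have h0 := hsN 0
      have : s = (s - bchSeq FA R x 0) + x := by
        show s = (s - x) + x; abel
      rw [this]
      exact add_mem h0 hx
    refine ⟨s, hs1, ?_, ?_⟩
    · -- quadratic estimate
      intro n hn hxn
      have hinv : ∀ k : ℕ, bchSeq FA R x k - x ∈ FA.F (2 * n) := by
        intro k
        induction k with
        | zero => show x - x ∈ _; rw [sub_self]; exact zero_mem _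
        | succ k ih =>
            have hck : bchSeq FA R x k ∈ FA.F n := by
              have : bchSeq FA R x k = (bchSeq FA R x k - x) + x := by abel
              rw [this]
              exact add_mem (FA.F_le (by omega) ih) hxn
            have heq : bchSeq FA R x (k + 1) - x
                = (FA.exp x - 1 - x) - (bchP FA R (bchSeq FA R x k) - 1 - bchSeq FA R x k) := by
              show (FA.exp x - bchP FA R (bchSeq FA R x k) + bchSeq FA R x k) - x = _
              abel
            rw [heq]
            exact sub_mem (FA.exp_quad hn hxn) (bchP_quad FA R hR hn hck)
      have heq : s - x = (s - bchSeq FA R x (2 * n)) + (bchSeq FA R x (2 * n) - x) := by abel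
      rw [heq]
      exact add_mem (FA.F_le (by omega) (hsN (2 * n))) (hinv (2 * n))
    · -- the fixed point equation
      have hzero : FA.exp x - bchP FA R s = 0 := by
        refine FA.F_sep _ fun n => ?_
        cases n with
        | zero => rw [FA.F_zero]; exact Submodule.mem_top
        | succ n =>
            have h2 := (hseqQ n).2
            have hd := hsN n
            have hps := bchP_sub FA R hR (by omega : 1 ≤ n + 1) hs1 (hseqQ n).1 hd
            have heq : FA.exp x - bchP FA R s
                = (FA.exp x - bchP FA R (bchSeq FA R x n))
                  - (bchP FA R s - bchP FA R (bchSeq FA R x n) - (s - bchSeq FA R x n))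
                  - (s - bchSeq FA R x n) := by abel
            rw [heq]
            exact sub_mem (sub_mem (FA.F_le (by omega) h2) (FA.F_le (by omega) hps)) hd
      have := sub_eq_zero.mp hzero
      exact this.symm
  choose σ hσ1 hσ2 hσ3 using fun x : FA.F 1 => Hex (x : A) x.2
  refine ⟨fun x => ⟨σ x, hσ1 x⟩, ⟨?_, ?_⟩, ?_⟩
  · intro n hn x hxn
    exact hσ2 x n hn hxn
  · intro x
    exact hσ3 x
  · intro χ' hχ'
    funext x
    apply Subtype.ext
    refine Puniq _ _ (χ' x).2 (hσ1 x) ?_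
    show bchP FA R ((χ' x : A)) = bchP FA R (σ x)
    rw [show bchP FA R ((χ' x : A)) = FA.exp (x : A) from hχ'.2 x, hσ3 x]
end

section
/- Let A be a complete filtered algebra over a field K of characteristic zero, and let R : A → A be a filtration-preserving K-linear map which is moreover an idempotent algebra homomorphism (R ∘ R = R and R(xy) = R(x)R(y) for all x, y ∈ A). Set R̃ := id_A − R, and let χ : A₁ → A₁ be the unique map with (χ − id)(Aₙ) ⊆ A₂ₙ for all n ≥ 1 and exp(R(χ(x)))·exp(R̃(χ(x))) = exp(x) for all x ∈ A₁. Then χ is given in closed form by χ(x) = R(x) + log(exp(−R(x))·exp(x)) for all x ∈ A₁. -/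
open scoped Classical

namespace CFAProof

open CompleteFilteredAlgebra Finset

/-- The key formal power-series (truncated, polynomial) identity `log (exp X) = X`:
all coefficients of degree `< N` of `X - Σ_{n<N} ((-1)^(n-1)/n) (Σ_{k<N} X^k/k! - 1)^n`
vanish. -/
lemma core_coeff (K : Type*) [Field K] [CharZero K] (N : ℕ) :
    ∀ m < N, ((Polynomial.X : Polynomial K) -
      ∑ n ∈ Finset.range N, Polynomial.C (((-1 : K) ^ (n - 1)) / (n : K)) *
        ((∑ k ∈ Finset.range N, Polynomial.C ((k.factorial : K)⁻¹) * Polynomial.X ^ k) - 1) ^ n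
      ).coeff m = 0 := by
  open Polynomial in
  intro m hm
  obtain ⟨M, rfl⟩ : ∃ M, N = M + 1 := ⟨N - 1, by omega⟩
  set E : K[X] := ∑ k ∈ Finset.range (M+1), C ((k.factorial : K)⁻¹) * X ^ k with hE
  set u : K[X] := E - 1 with hu
  set L : K[X] := ∑ n ∈ Finset.range (M+1), C (((-1 : K) ^ (n - 1)) / (n : K)) * u ^ n with hL
  have hu0 : u.coeff 0 = 0 := by
    simp [hu, hE, finset_sum_coeff, coeff_C_mul, coeff_X_pow, coeff_one]
  have hXdvd : (X : K[X]) ∣ u := X_dvd_iff.mpr hu0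
  have hL0 : L.coeff 0 = 0 := by
    rw [hL, finset_sum_coeff]
    apply Finset.sum_eq_zero
    intro n _
    rw [coeff_C_mul, coeff_zero_eq_eval_zero]
    cases n with
    | zero => simp
    | succ k =>
        have h0 : u.eval 0 = 0 := by rw [← coeff_zero_eq_eval_zero, hu0]
        simp [eval_pow, h0]
  have hfac : ∀ j : ℕ, (((j+1).factorial : K)⁻¹ * (((j+1:ℕ)):K)) = ((j.factorial : K))⁻¹ := by
    intro j
    have h2 : (((j+1:ℕ)):K) ≠ 0 := Nat.cast_ne_zero.mpr (Nat.succ_ne_zero j)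
    rw [Nat.factorial_succ, Nat.cast_mul, mul_inv, mul_comm, ← mul_assoc, mul_inv_cancel₀ h2,
      one_mul]
  have hE' : derivative E = E - C ((M.factorial : K)⁻¹) * X ^ M := by
    rw [hE, map_sum,
      Finset.sum_range_succ' (fun k => derivative (C ((k.factorial : K)⁻¹) * X ^ k)) M,
      Finset.sum_range_succ (fun k => C ((k.factorial : K)⁻¹) * X ^ k) M]
    simp only [derivative_C_mul_X_pow]
    have hterm : ∀ j : ℕ, (C (((j+1).factorial : K)⁻¹ * (((j+1:ℕ)):K)) * X ^ ((j+1) - 1) : K[X])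
        = C ((j.factorial : K)⁻¹) * X ^ j := by
      intro j
      rw [hfac j, Nat.add_sub_cancel]
    rw [Finset.sum_congr rfl (fun j _ => hterm j)]
    simp
  have hu' : derivative u = (1 + u) - C ((M.factorial : K)⁻¹) * X ^ M := by
    have h1 : derivative u = derivative E := by rw [hu]; simp
    have h2 : (1 : K[X]) + u = E := by rw [hu]; ring
    rw [h1, hE', h2]
  set G : K[X] := ∑ i ∈ Finset.range M, (-u) ^ i with hG
  have hgeom : G * (1 + u) = 1 - (-u) ^ M := by
    have h := geom_sum_mul (-u) M
    rw [hG]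
    linear_combination -h
  have hL' : derivative L = G * derivative u := by
    rw [hL, map_sum,
      Finset.sum_range_succ' (fun n => derivative (C (((-1 : K) ^ (n - 1)) / (n : K)) * u ^ n)) M]
    have hterm : ∀ j : ℕ, derivative (C (((-1 : K) ^ ((j+1) - 1)) / (((j+1:ℕ)) : K)) * u ^ (j+1))
        = (-u) ^ j * derivative u := by
      intro j
      rw [derivative_C_mul, derivative_pow, Nat.add_sub_cancel]
      have h2 : (((j+1:ℕ)):K) ≠ 0 := Nat.cast_ne_zero.mpr (Nat.succ_ne_zero j)
      have hcoef : C (((-1 : K) ^ j) / (((j+1:ℕ)) : K)) * C ((((j+1:ℕ))) : K)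
          = C ((-1 : K) ^ j) := by
        rw [← C_mul, div_mul_cancel₀ _ h2]
      have hCpow : C ((-1 : K) ^ j) * u ^ j = (-u) ^ j := by
        rw [map_pow, map_neg, map_one]
        exact (neg_pow u j).symm
      calc C (((-1 : K) ^ j) / (((j+1:ℕ)) : K)) * (C ((((j+1:ℕ))) : K) * u ^ j * derivative u)
          = (C (((-1 : K) ^ j) / (((j+1:ℕ)) : K)) * C ((((j+1:ℕ))) : K)) * u ^ j
              * derivative u := by ring
        _ = (C ((-1 : K) ^ j) * u ^ j) * derivative u := by rw [hcoef]
        _ = (-u) ^ j * derivative u := by rw [hCpow]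
    rw [Finset.sum_congr rfl (fun j _ => hterm j)]
    simp only [Nat.cast_zero, div_zero, map_zero, zero_mul, pow_zero, mul_one, derivative_C,
      add_zero]
    rw [hG, Finset.sum_mul]
  have hdvd : (X : K[X]) ^ M ∣ derivative ((X : K[X]) - L) := by
    rw [derivative_sub, derivative_X, hL', hu']
    have heq : (1:K[X]) - G * ((1 + u) - C ((M.factorial:K)⁻¹) * X^M)
        = (-u) ^ M + C ((M.factorial:K)⁻¹) * X ^ M * G := by
      linear_combination -hgeom
    rw [heq]
    exact dvd_add (pow_dvd_pow_of_dvd (dvd_neg.mpr hXdvd) M)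
      ⟨C ((M.factorial:K)⁻¹) * G, by ring⟩
  rcases Nat.eq_zero_or_pos m with hm0 | hmpos
  · subst hm0
    simp [coeff_sub, hL0]
  · have hd : (derivative ((X:K[X]) - L)).coeff (m-1) = 0 :=
      (X_pow_dvd_iff.mp hdvd) (m-1) (by omega)
    rw [coeff_derivative] at hd
    have h1 : (((m - 1 : ℕ) : K) + 1) ≠ 0 := by
      have h3 : (((m - 1 : ℕ) : K) + 1) = (((m - 1 + 1 : ℕ)) : K) := by push_cast; ring
      rw [h3]
      exact Nat.cast_ne_zero.mpr (Nat.succ_ne_zero _)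
    have h2 : ((X:K[X]) - L).coeff (m - 1 + 1) = 0 := by
      rcases mul_eq_zero.mp hd with h | h
      · exact h
      · exact absurd h h1
    have h4 : m - 1 + 1 = m := by omega
    rwa [h4] at h2

variable {K A : Type*} [Field K] [CharZero K] [Ring A] [Algebra K A]
variable (FA : CompleteFilteredAlgebra K A)

lemma F_antitone : Antitone FA.F := antitone_nat_of_succ_le FA.F_succ_le

lemma mem_F_zero (x : A) : x ∈ FA.F 0 := by rw [FA.F_zero]; trivial

lemma pow_mem {x : A} (hx : x ∈ FA.F 1) : ∀ n : ℕ, x ^ n ∈ FA.F n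
  | 0 => by simpa using mem_F_zero FA 1
  | n + 1 => by
      simpa [pow_succ] using FA.F_mul n 1 _ (pow_mem hx n) x hx

lemma eq_of_forall_sub_mem {s t : A} (h : ∀ n, s - t ∈ FA.F n) : s = t :=
  sub_eq_zero.mp (FA.F_sep _ h)

/-- Partial sums of the exponential series. -/
noncomputable def expS (FA : CompleteFilteredAlgebra K A) (x : A) (N : ℕ) : A :=
  ∑ n ∈ Finset.range N, ((n.factorial : K)⁻¹ • x ^ n : A)

/-- Partial sums of the logarithm series. -/
noncomputable def logS (FA : CompleteFilteredAlgebra K A) (y : A) (N : ℕ) : A :=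
  ∑ n ∈ Finset.range N, ((((-1 : K) ^ (n - 1)) / (n : K)) • (y - 1) ^ n : A)

lemma exp_spec {x : A} (hx : x ∈ FA.F 1) (N : ℕ) :
    FA.exp x - expS FA x N ∈ FA.F N := by
  have h : ∀ n : ℕ, ((n.factorial : K)⁻¹ • x ^ n) ∈ FA.F n := fun n =>
    Submodule.smul_mem _ _ (pow_mem FA hx n)
  rw [CompleteFilteredAlgebra.exp, dif_pos h]
  exact Classical.choose_spec (FA.F_complete _ h) N

lemma exp_eq_of {x s : A} (hx : x ∈ FA.F 1) (h : ∀ N, s - expS FA x N ∈ FA.F N) :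
    FA.exp x = s :=
  eq_of_forall_sub_mem FA fun N => by
    simpa [sub_sub_sub_cancel_right] using Submodule.sub_mem _ (exp_spec FA hx N) (h N)

lemma log_spec {y : A} (hy : y - 1 ∈ FA.F 1) (N : ℕ) :
    FA.log y - logS FA y N ∈ FA.F N := by
  have h : ∀ n : ℕ, ((((-1 : K) ^ (n - 1)) / (n : K)) • (y - 1) ^ n) ∈ FA.F n := fun n =>
    Submodule.smul_mem _ _ (pow_mem FA hy n)
  rw [CompleteFilteredAlgebra.log, dif_pos h]
  exact Classical.choose_spec (FA.F_complete _ h) N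

lemma log_eq_of {y s : A} (hy : y - 1 ∈ FA.F 1) (h : ∀ N, s - logS FA y N ∈ FA.F N) :
    FA.log y = s :=
  eq_of_forall_sub_mem FA fun N => by
    simpa [sub_sub_sub_cancel_right] using Submodule.sub_mem _ (log_spec FA hy N) (h N)

lemma expS_zero_arg (N : ℕ) : expS FA (0 : A) (N + 1) = 1 := by
  rw [expS, Finset.sum_eq_single_of_mem 0 (Finset.mem_range.mpr (Nat.succ_pos N))]
  · simp
  · intro b _ hb
    simp [zero_pow hb]

lemma exp_zero : FA.exp (0 : A) = 1 := by
  apply exp_eq_of FA (Submodule.zero_mem _)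
  intro N
  cases N with
  | zero => exact mem_F_zero FA _
  | succ N => simp [expS_zero_arg FA N]

lemma exp_sub_one_mem {x : A} (hx : x ∈ FA.F 1) : FA.exp x - 1 ∈ FA.F 1 := by
  have := exp_spec FA hx 1
  simpa [expS] using this

lemma pow_sub_mem {N : ℕ} {u v : A} (h : u - v ∈ FA.F N) : ∀ n : ℕ, u ^ n - v ^ n ∈ FA.F N
  | 0 => by simpa using Submodule.zero_mem _
  | n + 1 => by
      have h1 : u * (u ^ n - v ^ n) ∈ FA.F N := by
        simpa using FA.F_mul 0 N u (mem_F_zero FA u) _ (pow_sub_mem h n)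
      have h2 : (u - v) * v ^ n ∈ FA.F N := by
        simpa using FA.F_mul N 0 _ h (v ^ n) (mem_F_zero FA _)
      have heq : u ^ (n+1) - v ^ (n+1) = u * (u ^ n - v ^ n) + (u - v) * v ^ n := by
        rw [pow_succ' u, pow_succ' v]; noncomm_ring
      rw [heq]
      exact Submodule.add_mem _ h1 h2

lemma aeval_vanish {x : A} (hx : x ∈ FA.F 1) {N : ℕ} {p : Polynomial K}
    (h : ∀ m < N, p.coeff m = 0) : Polynomial.aeval x p ∈ FA.F N := by
  rw [Polynomial.aeval_eq_sum_range]
  apply Submodule.sum_mem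
  intro i _
  by_cases hi : i < N
  · rw [h i hi, zero_smul]; exact Submodule.zero_mem _
  · exact F_antitone FA (le_of_not_gt hi) (Submodule.smul_mem _ _ (pow_mem FA hx i))

lemma log_exp {z : A} (hz : z ∈ FA.F 1) : FA.log (FA.exp z) = z := by
  apply log_eq_of FA (exp_sub_one_mem FA hz)
  intro N
  have hw : (FA.exp z - 1) - (expS FA z N - 1) ∈ FA.F N := by
    simpa [sub_sub_sub_cancel_right] using exp_spec FA hz N
  have hpow := pow_sub_mem FA hw
  have hsum : logS FA (FA.exp z) N
      - ∑ n ∈ Finset.range N, (((-1 : K) ^ (n - 1)) / (n : K)) • (expS FA z N - 1) ^ n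
      ∈ FA.F N := by
    rw [logS, ← Finset.sum_sub_distrib]
    apply Submodule.sum_mem
    intro n _
    rw [← smul_sub]
    exact Submodule.smul_mem _ _ (hpow n)
  have hpoly : z - ∑ n ∈ Finset.range N, (((-1 : K) ^ (n - 1)) / (n : K)) • (expS FA z N - 1) ^ n
      ∈ FA.F N := by
    have hv := core_coeff K N
    have hmem := aeval_vanish FA hz (p := (Polynomial.X : Polynomial K) -
      ∑ n ∈ Finset.range N, Polynomial.C (((-1 : K) ^ (n - 1)) / (n : K)) *
        ((∑ k ∈ Finset.range N, Polynomial.C ((k.factorial : K)⁻¹) * Polynomial.X ^ k) - 1) ^ n)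
      hv
    have haev : (Polynomial.aeval z) ((Polynomial.X : Polynomial K) -
        ∑ n ∈ Finset.range N, Polynomial.C (((-1 : K) ^ (n - 1)) / (n : K)) *
          ((∑ k ∈ Finset.range N, Polynomial.C ((k.factorial : K)⁻¹) * Polynomial.X ^ k) - 1) ^ n)
        = z - ∑ n ∈ Finset.range N,
            (((-1 : K) ^ (n - 1)) / (n : K)) • (expS FA z N - 1) ^ n := by
      simp only [map_sub, map_sum, map_mul, map_pow, map_one, Polynomial.aeval_C,
        Polynomial.aeval_X, expS, Algebra.smul_def]
    rwa [haev] at hmem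
  have := Submodule.sub_mem _ hpoly hsum
  simpa [sub_sub_sub_cancel_right] using this

lemma triangle_reindex {β : Type*} [AddCommMonoid β] (N : ℕ) (g : ℕ → ℕ → β) :
    ∑ n ∈ Finset.range N, ∑ i ∈ Finset.range (n+1), g i (n - i)
      = ∑ p ∈ (Finset.range N ×ˢ Finset.range N).filter (fun p => p.1 + p.2 < N), g p.1 p.2 := by
  rw [Finset.sum_sigma']
  refine Finset.sum_nbij' (fun a => (a.2, a.1 - a.2)) (fun p => ⟨p.1 + p.2, p.1⟩) ?_ ?_ ?_ ?_ ?_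
  · rintro ⟨n, i⟩ h
    simp only [Finset.mem_sigma, Finset.mem_range] at h
    simp only [Finset.mem_filter, Finset.mem_product, Finset.mem_range]
    omega
  · rintro ⟨i, j⟩ h
    simp only [Finset.mem_filter, Finset.mem_product, Finset.mem_range] at h
    simp only [Finset.mem_sigma, Finset.mem_range]
    omega
  · rintro ⟨n, i⟩ h
    simp only [Finset.mem_sigma, Finset.mem_range] at h
    dsimp only
    rw [show i + (n - i) = n by omega]
  · rintro ⟨i, j⟩ h
    simp only [Finset.mem_filter, Finset.mem_product, Finset.mem_range] at h
    dsimp only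
    rw [show i + j - i = j by omega]
  · rintro ⟨n, i⟩ _
    rfl

lemma choose_scalar (K : Type*) [Field K] [CharZero K] {i n : ℕ} (h : i ≤ n) :
    (n.factorial : K)⁻¹ * (n.choose i : K)
      = (i.factorial : K)⁻¹ * (((n - i).factorial : K))⁻¹ := by
  have key := Nat.choose_mul_factorial_mul_factorial h
  have hk : ((n.choose i : ℕ) : K) * (i.factorial : K) * (((n-i).factorial : K))
      = (n.factorial : K) := by exact_mod_cast congrArg (Nat.cast : ℕ → K) key
  have h1 : (i.factorial : K) ≠ 0 := Nat.cast_ne_zero.mpr (Nat.factorial_ne_zero _)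
  have h2 : (((n-i).factorial : K)) ≠ 0 := Nat.cast_ne_zero.mpr (Nat.factorial_ne_zero _)
  have h3 : (n.factorial : K) ≠ 0 := Nat.cast_ne_zero.mpr (Nat.factorial_ne_zero _)
  field_simp
  linear_combination hk

lemma exp_add_comm {u v : A} (hu : u ∈ FA.F 1) (hv : v ∈ FA.F 1) (huv : Commute u v) :
    FA.exp u * FA.exp v = FA.exp (u + v) := by
  symm
  apply exp_eq_of FA (Submodule.add_mem _ hu hv)
  intro N
  set g : ℕ → ℕ → A :=
    fun i j => (((i.factorial : K)⁻¹ * (j.factorial : K)⁻¹) • (u ^ i * v ^ j) : A) with hg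
  have h1 : FA.exp u * FA.exp v - expS FA u N * expS FA v N ∈ FA.F N := by
    have heq : FA.exp u * FA.exp v - expS FA u N * expS FA v N
        = (FA.exp u - expS FA u N) * FA.exp v + expS FA u N * (FA.exp v - expS FA v N) := by
      noncomm_ring
    rw [heq]
    refine Submodule.add_mem _ ?_ ?_
    · simpa using FA.F_mul N 0 _ (exp_spec FA hu N) _ (mem_F_zero FA _)
    · simpa using FA.F_mul 0 N _ (mem_F_zero FA _) _ (exp_spec FA hv N)
  have h2 : expS FA u N * expS FA v N = ∑ p ∈ Finset.range N ×ˢ Finset.range N, g p.1 p.2 := by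
    rw [expS, expS, Finset.sum_mul_sum, Finset.sum_product]
    apply Finset.sum_congr rfl
    intro i _
    apply Finset.sum_congr rfl
    intro j _
    rw [hg, smul_mul_smul_comm]
  have h3 : expS FA (u + v) N = ∑ n ∈ Finset.range N, ∑ i ∈ Finset.range (n+1), g i (n - i) := by
    rw [expS]
    apply Finset.sum_congr rfl
    intro n _
    rw [huv.add_pow, Finset.smul_sum]
    apply Finset.sum_congr rfl
    intro i hi
    have hin : i ≤ n := by
      have := Finset.mem_range.mp hi
      omega
    have hc : u ^ i * v ^ (n - i) * ((n.choose i : ℕ) : A)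
        = ((n.choose i : ℕ) : K) • (u ^ i * v ^ (n - i)) := by
      rw [Nat.cast_smul_eq_nsmul, nsmul_eq_mul]
      exact ((Nat.cast_commute (n.choose i) (u ^ i * v ^ (n - i))).eq).symm
    rw [hg, hc, smul_smul, choose_scalar K hin]
  rw [h3, triangle_reindex]
  have h4 : (∑ p ∈ Finset.range N ×ˢ Finset.range N, g p.1 p.2)
      - ∑ p ∈ (Finset.range N ×ˢ Finset.range N).filter (fun p => p.1 + p.2 < N), g p.1 p.2
      ∈ FA.F N := by
    rw [← Finset.sum_filter_add_sum_filter_not (Finset.range N ×ˢ Finset.range N)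
      (fun p => p.1 + p.2 < N) (fun p => g p.1 p.2), add_sub_cancel_left]
    apply Submodule.sum_mem
    intro p hp
    simp only [Finset.mem_filter, not_lt] at hp
    rw [hg]
    exact Submodule.smul_mem _ _
      (F_antitone FA hp.2 (FA.F_mul _ _ _ (pow_mem FA hu _) _ (pow_mem FA hv _)))
  rw [h2] at h1
  have h6 := Submodule.add_mem _ h1 h4
  rw [sub_add_sub_cancel] at h6
  exact h6

lemma exp_neg_mul {a : A} (ha : a ∈ FA.F 1) : FA.exp (-a) * FA.exp a = 1 := by
  rw [exp_add_comm FA (Submodule.neg_mem _ ha) ha (Commute.refl a).neg_left, neg_add_cancel,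
    exp_zero FA]

variable (R : A →ₗ[K] A)

lemma R_pow (hRmul : ∀ x y : A, R (x * y) = R x * R y) (x : A) :
    ∀ n : ℕ, 1 ≤ n → R (x ^ n) = (R x) ^ n := by
  intro n hn
  induction n with
  | zero => omega
  | succ n ih =>
      rcases Nat.eq_zero_or_pos n with h0 | hpos
      · subst h0; simp
      · rw [pow_succ, hRmul, ih hpos, ← pow_succ]

lemma R_exp (hR : ∀ n : ℕ, ∀ x ∈ FA.F n, R x ∈ FA.F n)
    (hRmul : ∀ x y : A, R (x * y) = R x * R y) {z : A} (hz : z ∈ FA.F 1) :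
    R (FA.exp z) = R 1 - 1 + FA.exp (R z) := by
  apply eq_of_forall_sub_mem FA
  intro n
  apply F_antitone FA (Nat.le_succ n)
  have hRz : R z ∈ FA.F 1 := hR 1 z hz
  have h1 : R (FA.exp z) - R (expS FA z (n+1)) ∈ FA.F (n+1) := by
    rw [← map_sub]; exact hR (n+1) _ (exp_spec FA hz (n+1))
  have h2 : R (expS FA z (n+1)) = expS FA (R z) (n+1) - 1 + R 1 := by
    rw [expS, map_sum,
      Finset.sum_range_succ' (fun k => R ((k.factorial : K)⁻¹ • z ^ k)) n, expS,
      Finset.sum_range_succ' (fun k => ((k.factorial : K)⁻¹ • (R z) ^ k : A)) n]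
    have hterm : ∀ j : ℕ, R (((j+1).factorial : K)⁻¹ • z ^ (j+1))
        = ((j+1).factorial : K)⁻¹ • (R z) ^ (j+1) := by
      intro j
      rw [map_smul, R_pow R hRmul z (j+1) (by omega)]
    rw [Finset.sum_congr rfl (fun j _ => hterm j)]
    simp only [pow_zero, Nat.factorial_zero, Nat.cast_one, inv_one, one_smul]
    abel
  have h3 : FA.exp (R z) - expS FA (R z) (n+1) ∈ FA.F (n+1) := exp_spec FA hRz (n+1)
  have heq : R (FA.exp z) - (R 1 - 1 + FA.exp (R z))
      = (R (FA.exp z) - R (expS FA z (n+1))) - (FA.exp (R z) - expS FA (R z) (n+1)) := by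
    rw [h2]; abel
  rw [heq]
  exact Submodule.sub_mem _ h1 h3

lemma exp_mul_R_one (hRmul : ∀ x y : A, R (x * y) = R x * R y) {z : A} (hz : z ∈ FA.F 1)
    (hfix : R z = z) : (FA.exp z - 1) * R 1 = FA.exp z - 1 := by
  apply eq_of_forall_sub_mem FA
  intro n
  apply F_antitone FA (Nat.le_succ n)
  have hz1 : z * R 1 = z := by
    conv_lhs => rw [← hfix]
    rw [← hRmul, mul_one, hfix]
  have hzpow : ∀ k : ℕ, z ^ (k+1) * R 1 = z ^ (k+1) := by
    intro k
    rw [pow_succ, mul_assoc, hz1]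
  have hS : (expS FA z (n+1) - 1) * R 1 = expS FA z (n+1) - 1 := by
    have h0 : expS FA z (n+1) - 1 = ∑ j ∈ Finset.range n, ((j+1).factorial : K)⁻¹ • z ^ (j+1) := by
      rw [expS, Finset.sum_range_succ' (fun k => ((k.factorial : K)⁻¹ • z ^ k : A)) n]
      simp
    rw [h0, Finset.sum_mul]
    apply Finset.sum_congr rfl
    intro j _
    rw [smul_mul_assoc, hzpow j]
  have key : ((FA.exp z - 1) * R 1 - (FA.exp z - 1))
      = (FA.exp z - expS FA z (n+1)) * R 1 - (FA.exp z - expS FA z (n+1)) := by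
    have hsplit : FA.exp z - 1 = (FA.exp z - expS FA z (n+1)) + (expS FA z (n+1) - 1) := by abel
    rw [hsplit, add_mul, hS]
    abel
  rw [key]
  refine Submodule.sub_mem _ ?_ (exp_spec FA hz (n+1))
  simpa using FA.F_mul (n+1) 0 _ (exp_spec FA hz (n+1)) _ (mem_F_zero FA _)

end CFAProof

/-- For a complete filtered algebra `A` over a field `K` of characteristic zero
and a filtration-preserving `K`-linear map `R` which is an idempotent algebra homomorphism
(`R ∘ R = R`, `R(xy) = R(x)R(y)`), with `R̃ := id - R`, the unique map `χ : A₁ → A₁` with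
`(χ - id)(Aₙ) ⊆ A₂ₙ` and `exp(R(χ x)) * exp(R̃(χ x)) = exp x` is given in closed form by
`χ(x) = R(x) + log(exp(-R(x)) * exp(x))`. -/
theorem bch_recursion_idempotent_hom {K A : Type*} [Field K] [CharZero K]
    [Ring A] [Algebra K A] (FA : CompleteFilteredAlgebra K A) (R : A →ₗ[K] A)
    (hR : ∀ n : ℕ, ∀ x ∈ FA.F n, R x ∈ FA.F n)
    (hRmul : ∀ x y : A, R (x * y) = R x * R y)
    (hRidem : ∀ x : A, R (R x) = R x)
    (χ : FA.F 1 → FA.F 1)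
    (hdev : ∀ n : ℕ, 1 ≤ n → ∀ x : FA.F 1, (x : A) ∈ FA.F n →
      ((χ x : A) - (x : A)) ∈ FA.F (2 * n))
    (hfact : ∀ x : FA.F 1,
      FA.exp (R (χ x)) * FA.exp ((χ x : A) - R (χ x)) = FA.exp (x : A)) :
    ∀ x : FA.F 1,
      (χ x : A) = R x + FA.log (FA.exp (-(R (x : A))) * FA.exp (x : A)) := by
  intro x
  have hx : (x : A) ∈ FA.F 1 := x.2
  have hc : (χ x : A) ∈ FA.F 1 := (χ x).2
  have ha : R (x : A) ∈ FA.F 1 := hR 1 _ hx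
  have hb : R (χ x : A) ∈ FA.F 1 := hR 1 _ hc
  have hcb : (χ x : A) - R (χ x : A) ∈ FA.F 1 := Submodule.sub_mem _ hc hb
  have hR1 : R 1 * R 1 = R 1 := by rw [← hRmul, one_mul]
  have h1 : R (FA.exp (R (χ x : A)) * FA.exp ((χ x : A) - R (χ x : A))) = R (FA.exp (x : A)) :=
    congrArg R (hfact x)
  rw [hRmul, CFAProof.R_exp FA R hR hRmul hb, CFAProof.R_exp FA R hR hRmul hcb,
    CFAProof.R_exp FA R hR hRmul hx, hRidem] at h1
  have h2 : R ((χ x : A) - R (χ x : A)) = 0 := by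
    rw [map_sub, hRidem, sub_self]
  rw [h2, CFAProof.exp_zero FA] at h1
  have h4 : (R 1 - 1 + FA.exp (R (χ x : A))) * (R 1 - 1 + 1)
      = R 1 * R 1 - R 1 + (FA.exp (R (χ x : A)) - 1) * R 1 + R 1 := by noncomm_ring
  rw [h4, hR1, CFAProof.exp_mul_R_one FA R hRmul hb (hRidem _)] at h1
  have h5 : FA.exp (R (χ x : A)) - FA.exp (R (x : A)) = 0 := by
    have h6 : (R 1 - R 1 + (FA.exp (R (χ x : A)) - 1) + R 1)
        - (R 1 - 1 + FA.exp (R (x : A))) = 0 := sub_eq_zero.mpr h1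
    calc FA.exp (R (χ x : A)) - FA.exp (R (x : A))
        = (R 1 - R 1 + (FA.exp (R (χ x : A)) - 1) + R 1)
            - (R 1 - 1 + FA.exp (R (x : A))) := by abel
      _ = 0 := h6
  have h7 : R (χ x : A) = R (x : A) := by
    have h8 := congrArg FA.log (sub_eq_zero.mp h5)
    rwa [CFAProof.log_exp FA hb, CFAProof.log_exp FA ha] at h8
  have h9 : FA.exp (R (x : A)) * FA.exp ((χ x : A) - R (x : A)) = FA.exp (x : A) := by
    have := hfact x
    rwa [h7] at this
  have h10 : FA.exp (-(R (x : A))) * FA.exp ((x : A)) = FA.exp ((χ x : A) - R (x : A)) := by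
    rw [← h9, ← mul_assoc, CFAProof.exp_neg_mul FA ha, one_mul]
  have h11 : (χ x : A) - R (x : A) ∈ FA.F 1 := Submodule.sub_mem _ hc ha
  rw [h10, CFAProof.log_exp FA h11]
  abel
end

section
/- Let (A, R) be a Rota–Baxter algebra of weight λ ≠ 0 over a field K of characteristic zero. Let A⟦t⟧ be the ring of formal power series in a central variable t with coefficients in A, with R extended coefficientwise to R̂ : A⟦t⟧ → A⟦t⟧; then A⟦t⟧ with the filtration (tⁿA⟦t⟧)ₙ is a complete filtered Rota–Baxter algebra of weight λ, and there is a unique map χ_λ : tA⟦t⟧ → tA⟦t⟧ with (χ_λ − id)(tⁿA⟦t⟧) ⊆ t²ⁿA⟦t⟧ for all n ≥ 1 and exp(R̂(χ_λ(u)))·exp(R̃̂(χ_λ(u))) = exp(−λu) for all u ∈ tA⟦t⟧, where R̃̂ := −λ·id − R̂. Then for every a ∈ A, the element X := exp( R̂( χ_λ( λ⁻¹·log(1 + λ t a) ) ) ) of A⟦t⟧ satisfies the fixed point equation X = 1 + t·R̂(aX) (non-commutative Spitzer identity). -/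
open PowerSeries

variable (K : Type*) {A : Type*} [Field K] [CharZero K] [Ring A] [Algebra K A]

/-- The coefficientwise extension `R̂` of a linear map `R : A → A` to `A⟦t⟧`. -/
noncomputable def hatR (R : A →ₗ[K] A) (f : PowerSeries A) : PowerSeries A :=
  PowerSeries.mk fun n => R (PowerSeries.coeff n f)

/-- The `t`-adic exponential on `t·A⟦t⟧`: for `f` with zero constant term this is
`Σ_{k≥0} f^k / k!` (the `n`-th coefficient only receives contributions from `k ≤ n`). -/
noncomputable def expPS (f : PowerSeries A) : PowerSeries A :=
  PowerSeries.mk fun n => ∑ k ∈ Finset.range (n + 1),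
    ((k.factorial : K)⁻¹) • PowerSeries.coeff n (f ^ k)

/-- The `t`-adic logarithm on `1 + t·A⟦t⟧`: for `g = 1 + u` with `u` of zero constant term this
is `Σ_{k≥1} (-1)^{k-1} u^k / k` (the `k = 0` term vanishes since `1/0 = 0` in `K`). -/
noncomputable def logPS (g : PowerSeries A) : PowerSeries A :=
  PowerSeries.mk fun n => ∑ k ∈ Finset.range (n + 1),
    (((-1 : K) ^ (k - 1)) / (k : K)) • PowerSeries.coeff n ((g - 1) ^ k)

/-!
Write `x ⋆ y = R(x) y + x R(y) + λ x y`. The Rota–Baxter identity says exactly that `R`, and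
also `λ·id + R = -R̃`, turn `⋆` into the product of `A`. Hence, with
`ε(c) = Σ_{j ≥ 1} c^{⋆j} / j!`, one has `exp(R̂ c) = 1 + R̂ ε(c)` and
`exp(-R̃̂ c) = 1 + (λ + R̂) ε(c)` for `c ∈ tA⟦t⟧`.

Given `φ ∈ tA⟦t⟧`, let `X` be the solution of `X = 1 + R̂(φ X)` and `b` the solution of
`ε(b) = φ X`; both exist and are unique because the defining maps are `t`-adic contractions.
Then `exp(R̂ b) = X` and `exp(-R̃̂ b) = X + λ φ X = (1 + λ φ) X`, so
`exp(R̂ b) exp(R̃̂ b) = (1 + λ φ)⁻¹`. Choosing `1 + λ φ = exp(λ u)` defines `χ_λ(u) = b`.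
Conversely the product `P = exp(R̂ b) exp(R̃̂ b)` determines `w = ε(b)`: from
`1 + R̂ w = P (1 + (λ + R̂) w)` one gets `λ (w - w') = (1 - P) (λ + R̂)(w - w')`, and `1 - P`
lies in `tA⟦t⟧`. This gives uniqueness of `χ_λ`, and for `u = λ⁻¹ log(1 + λ t a)` it identifies
`χ_λ(u)` with the `b` built from `φ = t a`, so that `exp(R̂ χ_λ(u)) = X = 1 + t R̂(a X)`.

The identities `exp(f) exp(-f) = 1` and `exp(-log(1 + x)) (1 + x) = 1` are proved in `K⟦x⟧`
and transported to `A⟦t⟧` by substitution.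
-/

namespace Spitzer

open Finset

section Filtration

variable {B : Type*}

def Fil [Semiring B] (n : ℕ) (f : PowerSeries B) : Prop := ∀ k < n, coeff k f = 0

section Semiring

variable [Semiring B] {m n : ℕ} {f g : PowerSeries B}

theorem fil_zero (f : PowerSeries B) : Fil 0 f := fun _ hk => absurd hk (Nat.not_lt_zero _)

theorem fil_one_iff : Fil 1 f ↔ coeff 0 f = 0 :=
  ⟨fun h => h 0 Nat.one_pos, fun h k hk => by rwa [Nat.lt_one_iff.mp hk]⟩

theorem Fil.mono (hf : Fil n f) (h : m ≤ n) : Fil m f := fun k hk => hf k (hk.trans_le h)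

theorem Fil.add (hf : Fil n f) (hg : Fil n g) : Fil n (f + g) := fun k hk => by
  rw [map_add, hf k hk, hg k hk, add_zero]

theorem Fil.smul {S : Type*} [Semiring S] [Module S B] (c : S) (hf : Fil n f) : Fil n (c • f) :=
  fun k hk => by rw [coeff_smul, hf k hk, smul_zero]

theorem Fil.mul (hf : Fil m f) (hg : Fil n g) : Fil (m + n) (f * g) := fun k hk => by
  rw [coeff_mul]
  refine sum_eq_zero fun p hp => ?_
  rw [HasAntidiagonal.mem_antidiagonal] at hp
  rcases lt_or_ge p.1 m with h | h
  · rw [hf _ h, zero_mul]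
  · rw [hg _ (by omega), mul_zero]

theorem Fil.mul_left (g : PowerSeries B) (hf : Fil n f) : Fil n (g * f) := by
  simpa using (fil_zero g).mul hf

theorem Fil.mul_right (g : PowerSeries B) (hf : Fil n f) : Fil n (f * g) := by
  simpa using hf.mul (fil_zero g)

theorem Fil.pow (hf : Fil n f) (k : ℕ) : Fil (k * n) (f ^ k) := by
  induction k with
  | zero => rw [zero_mul]; exact fil_zero _
  | succ k ih => rw [pow_succ, Nat.succ_mul]; exact ih.mul hf

theorem coeff_pow_of_lt (hf : coeff 0 f = 0) {i k : ℕ} (h : i < k) : coeff i (f ^ k) = 0 :=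
  (fil_one_iff.mpr hf).pow k i (by omega)

theorem eq_zero_of_forall_fil (h : ∀ n, Fil n f) : f = 0 := by
  ext n; exact h (n + 1) n n.lt_succ_self

end Semiring

variable [Ring B] {m n : ℕ} {f g : PowerSeries B}

theorem Fil.neg (hf : Fil n f) : Fil n (-f) := fun k hk => by rw [map_neg, hf k hk, neg_zero]

theorem Fil.sub (hf : Fil n f) (hg : Fil n g) : Fil n (f - g) := by
  rw [sub_eq_add_neg]; exact hf.add hg.neg

theorem eq_of_forall_fil_sub (h : ∀ n, Fil n (f - g)) : f = g :=
  sub_eq_zero.mp (eq_zero_of_forall_fil h)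

theorem exists_fil_sub_sum {a : ℕ → PowerSeries B} (ha : ∀ n, Fil n (a n)) :
    ∃ s : PowerSeries B, ∀ N, Fil N (s - ∑ n ∈ range N, a n) := by
  refine ⟨mk fun k => ∑ m ∈ range (k + 1), coeff k (a m), fun N k hk => ?_⟩
  rw [map_sub, coeff_mk, map_sum, sub_eq_zero]
  refine sum_subset (fun m hm => by simp only [mem_range] at hm ⊢; omega) fun m _ hm => ?_
  exact ha m k (by simpa using hm)

theorem Fil.mul_sub_mul {f' g' : PowerSeries B} (hf : Fil n (f - f')) (hg : Fil n (g - g')) :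
    Fil n (f * g - f' * g') := by
  rw [show f * g - f' * g' = (f - f') * g + f' * (g - g') by noncomm_ring]
  exact (hf.mul_right g).add (hg.mul_left f')

end Filtration

section Contraction

variable {B : Type*} [Ring B] {F : PowerSeries B → PowerSeries B}

def Contracting (F : PowerSeries B → PowerSeries B) : Prop :=
  ∀ n f g, Fil n (f - g) → Fil (n + 1) (F f - F g)

/-- For a contraction the `n`-th coefficient of `F^[m] 0` no longer changes once `m > n`. -/
noncomputable def fixedPoint (F : PowerSeries B → PowerSeries B) : PowerSeries B :=
  mk fun n => coeff n (F^[n + 1] 0)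

theorem Contracting.fil_iterate_sub (hF : Contracting F) (m : ℕ) (f g : PowerSeries B) :
    Fil m (F^[m] f - F^[m] g) := by
  induction m with
  | zero => exact fil_zero _
  | succ m ih =>
    rw [Function.iterate_succ_apply', Function.iterate_succ_apply']
    exact hF m _ _ ih

theorem Contracting.fil_fixedPoint_sub (hF : Contracting F) (n : ℕ) :
    Fil n (fixedPoint F - F^[n] 0) := fun k hk => by
  have h := hF.fil_iterate_sub (k + 1) 0 (F^[n - (k + 1)] 0) k k.lt_succ_self
  rwa [← Function.iterate_add_apply, Nat.add_sub_cancel' hk, map_sub, ← coeff_mk k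
    fun n => coeff n (F^[n + 1] 0)] at h

theorem Contracting.isFixedPt_fixedPoint (hF : Contracting F) :
    Function.IsFixedPt F (fixedPoint F) := by
  refine eq_of_forall_fil_sub fun n => ?_
  have h := (hF n _ _ (hF.fil_fixedPoint_sub n)).sub (hF.fil_fixedPoint_sub (n + 1))
  rw [← Function.iterate_succ_apply' F n, sub_sub_sub_cancel_right] at h
  exact h.mono n.le_succ

theorem Contracting.eq_of_isFixedPt (hF : Contracting F) {f g : PowerSeries B}
    (hf : Function.IsFixedPt F f) (hg : Function.IsFixedPt F g) : f = g := by
  refine eq_of_forall_fil_sub fun n => ?_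
  induction n with
  | zero => exact fil_zero _
  | succ n ih => simpa only [hf.eq, hg.eq] using hF n f g ih

end Contraction

section Substitution

variable {S B : Type*} [CommRing S] [Ring B] [Algebra S B] {a : PowerSeries B}

/-- `g(a)`, for `a` with zero constant coefficient. The target need not be commutative, which
rules out `PowerSeries.subst`. -/
noncomputable def substPS (a : PowerSeries B) (g : PowerSeries S) : PowerSeries B :=
  mk fun n => ∑ k ∈ range (n + 1), coeff k g • coeff n (a ^ k)

theorem fil_substPS_sub_aeval_trunc {n : ℕ} (ha₀ : coeff 0 a = 0) (ha : Fil n a) (N : ℕ)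
    (g : PowerSeries S) : Fil (N * n) (substPS a g - Polynomial.aeval a (trunc N g)) :=
    fun k hk => by
  rw [map_sub, sub_eq_zero, Polynomial.aeval_def, eval₂_trunc_eq_sum_range, map_sum, substPS,
    coeff_mk]
  simp_rw [← Algebra.smul_def, coeff_smul]
  have hvan : ∀ i, k < i ∨ N ≤ i → coeff i g • coeff k (a ^ i) = 0 := by
    rintro i (hi | hi)
    · rw [coeff_pow_of_lt ha₀ hi, smul_zero]
    · rw [ha.pow i k (hk.trans_le (Nat.mul_le_mul_right n hi)), smul_zero]
  calc _ = ∑ i ∈ range (k + 1 + N), coeff i g • coeff k (a ^ i) :=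
        sum_subset (range_mono (by omega)) fun i _ hi => hvan i (.inl (by simpa using hi))
    _ = _ :=
        (sum_subset (range_mono (by omega)) fun i _ hi => hvan i (.inr (by simpa using hi))).symm

theorem fil_substPS_sub_aeval_trunc' (ha₀ : coeff 0 a = 0) (N : ℕ) (g : PowerSeries S) :
    Fil N (substPS a g - Polynomial.aeval a (trunc N g)) := by
  simpa using fil_substPS_sub_aeval_trunc ha₀ (fil_one_iff.mpr ha₀) N g

theorem fil_aeval_of_coeff_lt (ha₀ : coeff 0 a = 0) {N : ℕ} {P : Polynomial S}
    (hP : ∀ i < N, P.coeff i = 0) : Fil N (Polynomial.aeval a P) := by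
  obtain ⟨Q, rfl⟩ := Polynomial.X_pow_dvd_iff.mpr hP
  rw [map_mul, map_pow, Polynomial.aeval_X]
  simpa using ((fil_one_iff.mpr ha₀).pow N).mul_right _

theorem substPS_mul (ha₀ : coeff 0 a = 0) (g h : PowerSeries S) :
    substPS a (g * h) = substPS a g * substPS a h := by
  refine eq_of_forall_fil_sub fun N => ?_
  have hgh := fil_substPS_sub_aeval_trunc' ha₀ N (g * h)
  rw [← trunc_trunc_mul_trunc, ← Polynomial.coe_mul] at hgh
  have hP : Fil N (Polynomial.aeval a
      (trunc N g * trunc N h - trunc N ((trunc N g * trunc N h : Polynomial S) : PowerSeries S))) :=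
    fil_aeval_of_coeff_lt ha₀ fun i hi => by
      rw [Polynomial.coeff_sub, coeff_trunc, if_pos hi, Polynomial.coeff_coe, sub_self]
  have hprod := (fil_substPS_sub_aeval_trunc' ha₀ N g).mul_sub_mul
    (fil_substPS_sub_aeval_trunc' ha₀ N h)
  convert (hgh.sub hP).sub hprod using 1
  rw [map_sub, map_mul (Polynomial.aeval a)]
  abel

theorem substPS_one : substPS a (1 : PowerSeries S) = 1 := by
  ext n; simp [substPS, coeff_one]

theorem substPS_add (g h : PowerSeries S) : substPS a (g + h) = substPS a g + substPS a h := by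
  ext n; simp [substPS, add_smul, sum_add_distrib]

theorem substPS_X (ha₀ : coeff 0 a = 0) : substPS a (X : PowerSeries S) = a := by
  ext n; cases n <;> simp [substPS, coeff_X, ha₀]

theorem substPS_rescale (c : S) (g : PowerSeries S) :
    substPS a (rescale c g) = substPS (c • a) g := by
  ext n
  simp only [substPS, coeff_mk, coeff_rescale, smul_pow, coeff_smul, mul_smul]
  exact sum_congr rfl fun k _ => smul_comm _ _ _

noncomputable def substHom (ha₀ : coeff 0 a = 0) : PowerSeries S →+* PowerSeries B where
  toFun := substPS a
  map_one' := substPS_one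
  map_mul' := substPS_mul ha₀
  map_zero' := by simpa using substPS_add (a := a) (0 : PowerSeries S) 0
  map_add' := substPS_add

theorem substHom_apply (ha₀ : coeff 0 a = 0) (g : PowerSeries S) :
    substHom ha₀ g = substPS a g := rfl

theorem coeff_substPS_C_mul_X (b : B) (g : PowerSeries S) (n : ℕ) :
    coeff n (substPS (C b * X) g) = coeff n g • b ^ n := by
  have hpow : ∀ k, (C b * X : PowerSeries B) ^ k = C (b ^ k) * X ^ k := fun k => by
    rw [(commute_X (C b)).mul_pow, map_pow]
  simp only [substPS, coeff_mk, hpow, coeff_C_mul_X_pow, smul_ite, smul_zero]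
  simp

end Substitution

section Exponential

variable {𝕜 B : Type*} [Field 𝕜] [CharZero 𝕜] [Ring B] [Algebra 𝕜 B]

theorem expPS_eq_substPS (f : PowerSeries B) : expPS 𝕜 f = substPS f (exp 𝕜) := by
  ext n; simp [expPS, substPS]

theorem expPS_mul_expPS_neg {f : PowerSeries B} (hf : coeff 0 f = 0) :
    expPS 𝕜 f * expPS 𝕜 (-f) = 1 := by
  rw [← neg_one_smul 𝕜 f, expPS_eq_substPS, expPS_eq_substPS, ← substPS_rescale,
    ← substHom_apply hf, ← substHom_apply hf, ← map_mul]
  have h : exp 𝕜 * rescale (-1) (exp 𝕜) = 1 := exp_mul_exp_neg_eq_one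
  rw [h, map_one]

theorem expPS_neg_mul_expPS {f : PowerSeries B} (hf : coeff 0 f = 0) :
    expPS 𝕜 (-f) * expPS 𝕜 f = 1 := by
  simpa using expPS_mul_expPS_neg (𝕜 := 𝕜) (f := -f) (by rw [map_neg, hf, neg_zero])

theorem fil_expPS_sub_one_sub {n : ℕ} (hn : 1 ≤ n) {f : PowerSeries B} (hf : Fil n f) :
    Fil (2 * n) (expPS 𝕜 f - 1 - f) := by
  have h := fil_substPS_sub_aeval_trunc (hf 0 hn) hf 2 (exp 𝕜)
  rw [Polynomial.aeval_def, eval₂_trunc_eq_sum_range] at h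
  simpa [expPS_eq_substPS, sum_range_succ, sub_sub] using h

end Exponential

section Derivative

variable {S : Type*} [CommRing S]

theorem Fil.derivative {N : ℕ} {f : PowerSeries S} (hf : Fil (N + 1) f) :
    Fil N (derivative S f) := fun k hk => by
  rw [coeff_derivative, hf (k + 1) (by omega), zero_mul]

theorem derivative_substPS {g : PowerSeries S} (hg : coeff 0 g = 0) (h : PowerSeries S) :
    derivative S (substPS g h) = substPS g (derivative S h) * derivative S g := by
  refine eq_of_forall_fil_sub fun N => ?_
  have h1 := (fil_substPS_sub_aeval_trunc' hg (N + 1) h).derivative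
  rw [map_sub, Derivation.map_aeval, ← trunc_derivative, smul_eq_mul] at h1
  have h2 := (fil_substPS_sub_aeval_trunc' hg N (derivative S h)).mul_right (derivative S g)
  convert h1.sub h2 using 1
  rw [sub_mul]
  abel

end Derivative

section Logarithm

variable {𝕜 B : Type*} [Field 𝕜] [Ring B] [Algebra 𝕜 B]

variable (𝕜) in
noncomputable def logSeries : PowerSeries 𝕜 := mk fun n => (-1) ^ (n - 1) / n

theorem logPS_one_add (f : PowerSeries B) : logPS 𝕜 (1 + f) = substPS f (logSeries 𝕜) := by
  ext n; simp [logPS, substPS, logSeries]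

theorem constantCoeff_expPS (f : PowerSeries B) : constantCoeff (expPS 𝕜 f) = 1 := by
  rw [← coeff_zero_eq_constantCoeff_apply]; simp [expPS]

theorem expPS_substPS_C_mul_X (b : B) (g : PowerSeries 𝕜) :
    expPS 𝕜 (substPS (C b * X) g) = substPS (C b * X) (expPS 𝕜 g) := by
  have h0 : coeff 0 (C b * X) = 0 := by simp
  ext n
  rw [coeff_substPS_C_mul_X, expPS, expPS, coeff_mk, coeff_mk, sum_smul]
  refine sum_congr rfl fun k _ => ?_
  rw [← substHom_apply h0, ← map_pow, substHom_apply, coeff_substPS_C_mul_X, smul_assoc]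

variable [CharZero 𝕜]

theorem derivative_expPS {g : PowerSeries 𝕜} (hg : coeff 0 g = 0) :
    derivative 𝕜 (expPS 𝕜 g) = expPS 𝕜 g * derivative 𝕜 g := by
  rw [expPS_eq_substPS, derivative_substPS hg, derivative_exp]

theorem one_add_X_mul_derivative_logSeries : (1 + X) * derivative 𝕜 (logSeries 𝕜) = 1 := by
  have hd : ∀ n, coeff n (derivative 𝕜 (logSeries 𝕜)) = (-1) ^ n := fun n => by
    rw [coeff_derivative, logSeries, coeff_mk, Nat.add_sub_cancel]
    push_cast
    exact div_mul_cancel₀ _ (Nat.cast_add_one_ne_zero n)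
  ext n
  rw [add_mul, one_mul, map_add]
  rcases n with _ | n
  · simp [hd]
  · rw [coeff_succ_X_mul, hd, hd, coeff_one, if_neg n.succ_ne_zero, pow_succ]
    ring

theorem expPS_neg_logSeries_mul : expPS 𝕜 (-logSeries 𝕜) * (1 + X) = 1 := by
  have h0 : coeff 0 (-logSeries 𝕜) = 0 := by simp [logSeries]
  refine derivative.ext ?_ ?_
  · rw [Derivation.leibniz, derivative_expPS h0, map_add, Derivation.map_one_eq_zero, derivative_X,
      zero_add, smul_eq_mul, smul_eq_mul, map_neg]
    linear_combination (-expPS 𝕜 (-logSeries 𝕜)) * one_add_X_mul_derivative_logSeries (𝕜 := 𝕜)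
  · simp [constantCoeff_expPS]

theorem expPS_neg_logPS_one_add_mul (b : B) :
    expPS 𝕜 (-logPS 𝕜 (1 + C b * X)) * (1 + C b * X) = 1 := by
  have h0 : coeff 0 (C b * X) = 0 := by simp
  have h1 : (1 + C b * X : PowerSeries B) = substHom h0 (1 + X : PowerSeries 𝕜) := by
    rw [map_add, map_one, substHom_apply, substPS_X h0]
  rw [logPS_one_add, ← substHom_apply h0, ← map_neg, substHom_apply, expPS_substPS_C_mul_X,
    ← substHom_apply h0, h1, ← map_mul, expPS_neg_logSeries_mul, map_one]

end Logarithm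

section RotaBaxter

variable {𝕜 B : Type*} [Field 𝕜] [Ring B] [Algebra 𝕜 B] (lam : 𝕜) (R : B →ₗ[𝕜] B)
  {S : B →ₗ[𝕜] B} {m n : ℕ} {c c' f g : PowerSeries B}

theorem coeff_hatR (f : PowerSeries B) (n : ℕ) : coeff n (hatR 𝕜 R f) = R (coeff n f) :=
  coeff_mk _ _

variable {R} in
theorem Fil.hatR (hf : Fil n f) : Fil n (hatR 𝕜 R f) :=
  fun k hk => by rw [coeff_hatR, hf k hk, map_zero]

theorem hatR_sub (f g : PowerSeries B) : hatR 𝕜 R (f - g) = hatR 𝕜 R f - hatR 𝕜 R g := by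
  ext n; simp [coeff_hatR]

theorem hatR_zero : hatR 𝕜 R (0 : PowerSeries B) = 0 := by
  ext n; simp [coeff_hatR]

theorem hatR_X_mul (f : PowerSeries B) : hatR 𝕜 R (X * f) = X * hatR 𝕜 R f := by
  ext n; cases n <;> simp [coeff_hatR, coeff_succ_X_mul]

theorem hatR_smul_id_add (f : PowerSeries B) :
    hatR 𝕜 (lam • LinearMap.id + R) f = lam • f + hatR 𝕜 R f := by
  ext n; simp [coeff_hatR]

theorem neg_smul_sub_hatR (f : PowerSeries B) :
    -(lam • f) - hatR 𝕜 R f = -hatR 𝕜 (lam • LinearMap.id + R) f := by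
  rw [hatR_smul_id_add]; abel

noncomputable def rbMul (f g : PowerSeries B) : PowerSeries B :=
  hatR 𝕜 R f * g + f * hatR 𝕜 R g + lam • (f * g)

/-- `rbPowSucc lam R c k` is the left-bracketed `⋆`-power of `c` with `k + 1` factors. -/
noncomputable def rbPowSucc (c : PowerSeries B) : ℕ → PowerSeries B
  | 0 => c
  | k + 1 => rbMul lam R (rbPowSucc c k) c

def IsRotaBaxter : Prop :=
  ∀ x y, R x * R y = R (R x * y + x * R y + lam • (x * y))

def MapsRBMul (S : B →ₗ[𝕜] B) : Prop :=
  ∀ x y, S (R x * y + x * R y + lam • (x * y)) = S x * S y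

variable {lam R}

theorem mapsRBMul_self (hRB : IsRotaBaxter lam R) : MapsRBMul lam R R :=
  fun x y => (hRB x y).symm

theorem mapsRBMul_smul_id_add (hRB : IsRotaBaxter lam R) :
    MapsRBMul lam R (lam • LinearMap.id + R) := fun x y => by
  simp only [LinearMap.add_apply, LinearMap.smul_apply, LinearMap.id_apply, hRB x y, smul_add,
    add_mul, mul_add, smul_mul_assoc, mul_smul_comm]
  abel

theorem hatR_rbMul (hS : MapsRBMul lam R S) (f g : PowerSeries B) :
    hatR 𝕜 S (rbMul lam R f g) = hatR 𝕜 S f * hatR 𝕜 S g := by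
  ext n
  simp only [rbMul, coeff_hatR, map_add, coeff_smul, coeff_mul, smul_sum, ← sum_add_distrib,
    map_sum]
  exact sum_congr rfl fun p _ => by rw [← hS, map_add, map_add]

theorem hatR_rbPowSucc (hS : MapsRBMul lam R S) (c : PowerSeries B) (k : ℕ) :
    hatR 𝕜 S (rbPowSucc lam R c k) = hatR 𝕜 S c ^ (k + 1) := by
  induction k with
  | zero => rw [rbPowSucc, pow_one]
  | succ k ih => rw [rbPowSucc, hatR_rbMul hS, ih, ← pow_succ]

theorem hatR_mul_hatR (hRB : IsRotaBaxter lam R) (f g : PowerSeries B) :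
    hatR 𝕜 R f * hatR 𝕜 R g = hatR 𝕜 R (hatR 𝕜 R f * g + f * hatR 𝕜 R g + lam • (f * g)) :=
  (hatR_rbMul (mapsRBMul_self hRB) f g).symm

variable (lam R) in
/-- `Σ_{j ≥ 1} c^{⋆j} / j!`; cutting the sum at `k < n` in the `n`-th coefficient loses nothing
when `coeff 0 c = 0`. -/
noncomputable def rbExpSubOne (c : PowerSeries B) : PowerSeries B :=
  mk fun n => ∑ k ∈ range n, ((k + 1).factorial : 𝕜)⁻¹ • coeff n (rbPowSucc lam R c k)

variable (lam R) in
noncomputable def rbExpTail (c : PowerSeries B) : PowerSeries B :=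
  mk fun n => ∑ k ∈ Ico 1 n, ((k + 1).factorial : 𝕜)⁻¹ • coeff n (rbPowSucc lam R c k)

theorem expPS_hatR (hS : MapsRBMul lam R S) (c : PowerSeries B) :
    expPS 𝕜 (hatR 𝕜 S c) = 1 + hatR 𝕜 S (rbExpSubOne lam R c) := by
  ext n
  rw [expPS, coeff_mk, sum_range_succ', map_add, coeff_hatR, rbExpSubOne, coeff_mk, map_sum,
    add_comm]
  simp [← coeff_hatR, hatR_rbPowSucc hS]

theorem Fil.rbMul (hf : Fil m f) (hg : Fil n g) : Fil (m + n) (rbMul lam R f g) :=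
  ((hf.hatR.mul hg).add (hf.mul hg.hatR)).add ((hf.mul hg).smul lam)

theorem Fil.rbPowSucc (hc : Fil m c) (k : ℕ) : Fil ((k + 1) * m) (rbPowSucc lam R c k) := by
  induction k with
  | zero => simpa [Spitzer.rbPowSucc] using hc
  | succ k ih => rw [Spitzer.rbPowSucc, Nat.succ_mul]; exact ih.rbMul hc

theorem Fil.rbExpTail (hc : Fil m c) : Fil (2 * m) (rbExpTail lam R c) := fun j hj => by
  rw [Spitzer.rbExpTail, coeff_mk]
  refine sum_eq_zero fun k hk => ?_
  rw [mem_Ico] at hk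
  rw [hc.rbPowSucc k j (hj.trans_le (Nat.mul_le_mul_right m (by omega))), smul_zero]

theorem rbMul_sub_rbMul (f f' g g' : PowerSeries B) :
    rbMul lam R f g - rbMul lam R f' g' = rbMul lam R (f - f') g + rbMul lam R f' (g - g') := by
  simp only [rbMul, hatR_sub, sub_mul, mul_sub, smul_sub]
  abel

theorem fil_rbPowSucc_sub (hc : Fil 1 c) (hc' : Fil 1 c') (h : Fil n (c - c')) (k : ℕ) :
    Fil (n + 1) (rbPowSucc lam R c (k + 1) - rbPowSucc lam R c' (k + 1)) := by
  induction k with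
  | zero =>
    rw [rbPowSucc, rbPowSucc, rbPowSucc, rbPowSucc, rbMul_sub_rbMul]
    exact (h.rbMul hc).add (by simpa [add_comm] using hc'.rbMul h)
  | succ k ih =>
    change Fil (n + 1) (rbMul lam R (rbPowSucc lam R c (k + 1)) c -
      rbMul lam R (rbPowSucc lam R c' (k + 1)) c')
    rw [rbMul_sub_rbMul]
    exact (ih.rbMul hc).mono (by omega) |>.add
      (by simpa [add_comm] using (((hc'.rbPowSucc (k + 1)).mono (by nlinarith)).rbMul h))

theorem fil_rbExpTail_sub (hc : Fil 1 c) (hc' : Fil 1 c') (h : Fil n (c - c')) :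
    Fil (n + 1) (rbExpTail lam R c - rbExpTail lam R c') := fun j hj => by
  rw [map_sub, rbExpTail, rbExpTail, coeff_mk, coeff_mk, ← sum_sub_distrib]
  refine sum_eq_zero fun k hk => ?_
  obtain ⟨k, rfl⟩ := Nat.exists_eq_add_of_le' (mem_Ico.mp hk).1
  rw [← smul_sub, ← map_sub, fil_rbPowSucc_sub hc hc' h k j hj, smul_zero]

theorem rbExpSubOne_eq_add_rbExpTail (hc : coeff 0 c = 0) :
    rbExpSubOne lam R c = c + rbExpTail lam R c := by
  ext n
  rcases n with _ | n
  · simpa [rbExpSubOne, rbExpTail] using hc.symm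
  · rw [rbExpSubOne, rbExpTail, coeff_mk, map_add, coeff_mk, sum_range_succ', sum_Ico_eq_sum_range]
    simp [rbPowSucc, add_comm]

end RotaBaxter

section Inverse

variable {𝕜 B : Type*} [Field 𝕜] [Ring B] [Algebra 𝕜 B] {lam : 𝕜} {R : B →ₗ[𝕜] B}
  {n : ℕ} {c w : PowerSeries B}

/-- Precomposing with `eraseConst` turns a map that contracts on `tB⟦t⟧` into a contraction of
all of `B⟦t⟧`. -/
noncomputable def eraseConst (c : PowerSeries B) : PowerSeries B :=
  mk fun n => if n = 0 then 0 else coeff n c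

theorem fil_one_eraseConst (c : PowerSeries B) : Fil 1 (eraseConst c) :=
  fil_one_iff.mpr (by simp [eraseConst])

theorem eraseConst_of_coeff_zero (hc : coeff 0 c = 0) : eraseConst c = c := by
  ext n; rcases n with _ | n <;> simp [eraseConst, hc]

theorem Fil.eraseConst_sub {c' : PowerSeries B} (h : Fil n (c - c')) :
    Fil n (eraseConst c - eraseConst c') := fun k hk => by
  have := h k hk
  rcases k with _ | k <;> simp_all [eraseConst]

variable (lam R) in
/-- The inverse of `rbExpSubOne` on `tB⟦t⟧`: the solution `c` of `c + rbExpTail c = w`. -/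
noncomputable def rbLogOneAdd (w : PowerSeries B) : PowerSeries B :=
  fixedPoint fun c => w - rbExpTail lam R (eraseConst c)

theorem contracting_rbLogOneAdd (w : PowerSeries B) :
    Contracting fun c => w - rbExpTail lam R (eraseConst c) := fun n c c' h => by
  have h' : Fil n (c' - c) := by simpa using h.neg
  rw [sub_sub_sub_cancel_left]
  exact fil_rbExpTail_sub (fil_one_eraseConst c') (fil_one_eraseConst c) h'.eraseConst_sub

theorem rbLogOneAdd_eq_sub_eraseConst (w : PowerSeries B) :
    rbLogOneAdd lam R w = w - rbExpTail lam R (eraseConst (rbLogOneAdd lam R w)) :=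
  (contracting_rbLogOneAdd w).isFixedPt_fixedPoint.symm

theorem coeff_zero_rbLogOneAdd (hw : coeff 0 w = 0) : coeff 0 (rbLogOneAdd lam R w) = 0 := by
  rw [rbLogOneAdd_eq_sub_eraseConst, map_sub, hw,
    (fil_one_eraseConst _).rbExpTail 0 (by omega), sub_zero]

theorem rbLogOneAdd_eq (hw : coeff 0 w = 0) :
    rbLogOneAdd lam R w = w - rbExpTail lam R (rbLogOneAdd lam R w) := by
  conv_lhs => rw [rbLogOneAdd_eq_sub_eraseConst, eraseConst_of_coeff_zero
    (coeff_zero_rbLogOneAdd hw)]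

theorem rbExpSubOne_rbLogOneAdd (hw : coeff 0 w = 0) :
    rbExpSubOne lam R (rbLogOneAdd lam R w) = w := by
  rw [rbExpSubOne_eq_add_rbExpTail (coeff_zero_rbLogOneAdd hw), eq_sub_iff_add_eq.mp
    (rbLogOneAdd_eq hw)]

theorem rbLogOneAdd_rbExpSubOne (hc : coeff 0 c = 0) :
    rbLogOneAdd lam R (rbExpSubOne lam R c) = c := by
  refine (contracting_rbLogOneAdd _).eq_of_isFixedPt
    (contracting_rbLogOneAdd _).isFixedPt_fixedPoint ?_
  rw [Function.IsFixedPt, eraseConst_of_coeff_zero hc, rbExpSubOne_eq_add_rbExpTail hc,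
    add_sub_cancel_right]

theorem Fil.rbLogOneAdd (hw₀ : coeff 0 w = 0) (hw : Fil n w) :
    Fil n (rbLogOneAdd lam R w) := by
  intro k hk
  induction k using Nat.strong_induction_on with
  | _ k ih =>
    rcases k.eq_zero_or_pos with rfl | hk0
    · exact coeff_zero_rbLogOneAdd hw₀
    · have hck : Fil k (Spitzer.rbLogOneAdd lam R w) := fun i hi => ih i hi (hi.trans hk)
      rw [rbLogOneAdd_eq hw₀, map_sub, hw k hk, hck.rbExpTail k (by omega), sub_zero]

theorem fil_rbLogOneAdd_sub (hw₀ : coeff 0 w = 0) (hw : Fil n w) :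
    Fil (2 * n) (rbLogOneAdd lam R w - w) := by
  rw [rbLogOneAdd_eq hw₀, sub_sub_cancel_left]
  exact (hw.rbLogOneAdd hw₀).rbExpTail.neg

end Inverse

section BCH

variable {𝕜 B : Type*} [Field 𝕜] [Ring B] [Algebra 𝕜 B] {lam : 𝕜} {R : B →ₗ[𝕜] B}
  {n : ℕ} {φ : PowerSeries B}

variable (R) in
noncomputable def spitzerSol (φ : PowerSeries B) : PowerSeries B :=
  fixedPoint fun Z => 1 + hatR 𝕜 R (φ * Z)

theorem contracting_spitzerSol (hφ : Fil 1 φ) :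
    Contracting fun Z => 1 + hatR 𝕜 R (φ * Z) := fun n f g h => by
  rw [add_sub_add_left_eq_sub, ← hatR_sub, ← mul_sub]
  simpa [add_comm] using (hφ.mul h).hatR

theorem spitzerSol_eq (hφ : Fil 1 φ) : spitzerSol R φ = 1 + hatR 𝕜 R (φ * spitzerSol R φ) :=
  (contracting_spitzerSol hφ).isFixedPt_fixedPoint.symm

theorem fil_spitzerSol_sub_one (hφ₁ : Fil 1 φ) (hφ : Fil n φ) : Fil n (spitzerSol R φ - 1) := by
  rw [spitzerSol_eq hφ₁, add_sub_cancel_left]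
  exact (hφ.mul_right _).hatR

variable (lam R) in
noncomputable def bchSeries (φ : PowerSeries B) : PowerSeries B :=
  rbLogOneAdd lam R (φ * spitzerSol R φ)

theorem coeff_zero_bchSeries (hφ : Fil 1 φ) : coeff 0 (bchSeries lam R φ) = 0 :=
  coeff_zero_rbLogOneAdd (fil_one_iff.mp (hφ.mul_right _))

section RB

variable (hRB : IsRotaBaxter lam R)
include hRB

theorem expPS_hatR_bchSeries (hφ : Fil 1 φ) :
    expPS 𝕜 (hatR 𝕜 R (bchSeries lam R φ)) = spitzerSol R φ := by
  rw [expPS_hatR (mapsRBMul_self hRB), bchSeries,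
    rbExpSubOne_rbLogOneAdd (fil_one_iff.mp (hφ.mul_right _)), ← spitzerSol_eq hφ]

theorem expPS_hatR_smul_id_add_bchSeries (hφ : Fil 1 φ) :
    expPS 𝕜 (hatR 𝕜 (lam • LinearMap.id + R) (bchSeries lam R φ)) =
      (1 + lam • φ) * spitzerSol R φ := by
  rw [expPS_hatR (mapsRBMul_smul_id_add hRB), bchSeries,
    rbExpSubOne_rbLogOneAdd (fil_one_iff.mp (hφ.mul_right _)), hatR_smul_id_add, add_mul,
    one_mul, smul_mul_assoc]
  calc _ = (1 + hatR 𝕜 R (φ * spitzerSol R φ)) + lam • (φ * spitzerSol R φ) := by abel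
    _ = _ := by rw [← spitzerSol_eq hφ]

variable [CharZero 𝕜]

theorem expPS_hatR_mul_expPS_neg_bchSeries (hφ : Fil 1 φ) {e : PowerSeries B}
    (he : e * (1 + lam • φ) = 1) :
    expPS 𝕜 (hatR 𝕜 R (bchSeries lam R φ)) *
      expPS 𝕜 (-(lam • bchSeries lam R φ) - hatR 𝕜 R (bchSeries lam R φ)) = e := by
  set b := bchSeries lam R φ
  have hinv := expPS_mul_expPS_neg (𝕜 := 𝕜) (f := hatR 𝕜 (lam • LinearMap.id + R) b)
    (by rw [coeff_hatR, coeff_zero_bchSeries hφ, map_zero])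
  rw [expPS_hatR_smul_id_add_bchSeries hRB hφ] at hinv
  rw [neg_smul_sub_hatR, expPS_hatR_bchSeries hRB hφ]
  calc
    _ = e * ((1 + lam • φ) * spitzerSol R φ * expPS 𝕜 (-hatR 𝕜 (lam • LinearMap.id + R) b)) := by
      rw [← mul_assoc, ← mul_assoc, he, one_mul]
    _ = e := by rw [hinv, mul_one]

theorem one_add_hatR_rbExpSubOne {b : PowerSeries B} (hb : coeff 0 b = 0) :
    1 + hatR 𝕜 R (rbExpSubOne lam R b) =
      expPS 𝕜 (hatR 𝕜 R b) * expPS 𝕜 (-(lam • b) - hatR 𝕜 R b) *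
        (1 + hatR 𝕜 (lam • LinearMap.id + R) (rbExpSubOne lam R b)) := by
  rw [← expPS_hatR (mapsRBMul_self hRB), ← expPS_hatR (mapsRBMul_smul_id_add hRB),
    neg_smul_sub_hatR,
    mul_assoc, expPS_neg_mul_expPS (by rw [coeff_hatR, hb, map_zero]), mul_one]

theorem rbExpSubOne_eq_of_expPS_hatR_mul_eq (hlam : lam ≠ 0) {b b' : PowerSeries B}
    (hb : coeff 0 b = 0) (hb' : coeff 0 b' = 0)
    (h : expPS 𝕜 (hatR 𝕜 R b) * expPS 𝕜 (-(lam • b) - hatR 𝕜 R b) =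
      expPS 𝕜 (hatR 𝕜 R b') * expPS 𝕜 (-(lam • b') - hatR 𝕜 R b')) :
    rbExpSubOne lam R b = rbExpSubOne lam R b' := by
  set T : B →ₗ[𝕜] B := lam • LinearMap.id + R
  set P := expPS 𝕜 (hatR 𝕜 R b) * expPS 𝕜 (-(lam • b) - hatR 𝕜 R b)
  set w := rbExpSubOne lam R b
  set w' := rbExpSubOne lam R b'
  have hP : Fil 1 (1 - P) := fil_one_iff.mpr (by
    rw [coeff_zero_eq_constantCoeff_apply, map_sub, map_one, map_mul, constantCoeff_expPS,
      constantCoeff_expPS, mul_one, sub_self])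
  have e1 : P * hatR 𝕜 T w = 1 + hatR 𝕜 R w - P := by
    rw [one_add_hatR_rbExpSubOne hRB hb, mul_add, mul_one]; abel
  have e2 : P * hatR 𝕜 T w' = 1 + hatR 𝕜 R w' - P := by
    rw [one_add_hatR_rbExpSubOne hRB hb', ← h, mul_add, mul_one]; abel
  have key : (1 - P) * hatR 𝕜 T (w - w') = lam • (w - w') := by
    rw [hatR_sub, sub_mul, one_mul, mul_sub, e1, e2, hatR_smul_id_add, hatR_smul_id_add, smul_sub]
    abel
  have hcontr : Contracting fun d => lam⁻¹ • ((1 - P) * hatR 𝕜 T d) := fun n f g hfg => by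
    rw [← smul_sub, ← mul_sub, ← hatR_sub]
    simpa [add_comm] using (hP.mul hfg.hatR).smul lam⁻¹
  refine sub_eq_zero.mp (hcontr.eq_of_isFixedPt ?_ (by simp [Function.IsFixedPt, hatR_zero]))
  simp only [Function.IsFixedPt, key, inv_smul_smul₀ hlam]

theorem eq_of_expPS_hatR_mul_eq (hlam : lam ≠ 0) {b b' : PowerSeries B} (hb : coeff 0 b = 0)
    (hb' : coeff 0 b' = 0)
    (h : expPS 𝕜 (hatR 𝕜 R b) * expPS 𝕜 (-(lam • b) - hatR 𝕜 R b) =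
      expPS 𝕜 (hatR 𝕜 R b') * expPS 𝕜 (-(lam • b') - hatR 𝕜 R b')) : b = b' := by
  simpa only [rbLogOneAdd_rbExpSubOne hb, rbLogOneAdd_rbExpSubOne hb'] using
    congrArg (rbLogOneAdd lam R) (rbExpSubOne_eq_of_expPS_hatR_mul_eq hRB hlam hb hb' h)

end RB

end BCH

section SpitzerIdentity

variable {𝕜 B : Type*} [Field 𝕜] [Ring B] [Algebra 𝕜 B] {lam : 𝕜}
  {R : B →ₗ[𝕜] B} {n : ℕ} {u : PowerSeries B}

variable (lam R) in
noncomputable def bchMap (u : PowerSeries B) : PowerSeries B :=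
  bchSeries lam R (lam⁻¹ • (expPS 𝕜 (lam • u) - 1))

theorem fil_one_smul_expPS_sub_one (u : PowerSeries B) :
    Fil 1 (lam⁻¹ • (expPS 𝕜 (lam • u) - 1)) :=
  fil_one_iff.mpr (by simp [coeff_zero_eq_constantCoeff_apply, constantCoeff_expPS])

theorem coeff_zero_bchMap (u : PowerSeries B) : coeff 0 (bchMap lam R u) = 0 :=
  coeff_zero_bchSeries (fil_one_smul_expPS_sub_one u)

variable [CharZero 𝕜]

theorem fil_bchMap_sub (hlam : lam ≠ 0) (hn : 1 ≤ n) (hu : Fil n u) :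
    Fil (2 * n) (bchMap lam R u - u) := by
  set φ := lam⁻¹ • (expPS 𝕜 (lam • u) - 1)
  have hφ₁ : Fil 1 φ := fil_one_smul_expPS_sub_one u
  have hφu : Fil (2 * n) (φ - u) := by
    have h := (fil_expPS_sub_one_sub (𝕜 := 𝕜) hn (hu.smul lam)).smul lam⁻¹
    rwa [smul_sub, inv_smul_smul₀ hlam] at h
  have hφ : Fil n φ := by simpa using (hφu.mono (by omega)).add hu
  have hφX : Fil (2 * n) (φ * spitzerSol R φ - φ) := by
    simpa [two_mul, mul_sub] using hφ.mul (fil_spitzerSol_sub_one hφ₁ hφ)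
  have hb := fil_rbLogOneAdd_sub (lam := lam) (R := R) (fil_one_iff.mp (hφ₁.mul_right _))
    (hφ.mul_right (spitzerSol R φ))
  convert (hb.add hφX).add hφu using 1
  simp only [bchMap, bchSeries, φ]
  abel

variable (hRB : IsRotaBaxter lam R)
include hRB

theorem expPS_hatR_mul_expPS_neg_bchMap (hlam : lam ≠ 0) (hu : coeff 0 u = 0) :
    expPS 𝕜 (hatR 𝕜 R (bchMap lam R u)) *
      expPS 𝕜 (-(lam • bchMap lam R u) - hatR 𝕜 R (bchMap lam R u)) = expPS 𝕜 (-(lam • u)) := by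
  refine expPS_hatR_mul_expPS_neg_bchSeries hRB (fil_one_smul_expPS_sub_one u) ?_
  rw [smul_inv_smul₀ hlam, add_sub_cancel]
  exact expPS_neg_mul_expPS (by rw [coeff_smul, hu, smul_zero])

theorem existsUnique_bchMap (hlam : lam ≠ 0) :
    ∃! χ : {f : PowerSeries B // coeff 0 f = 0} → {f : PowerSeries B // coeff 0 f = 0},
      (∀ n : ℕ, 1 ≤ n → ∀ u : {f : PowerSeries B // coeff 0 f = 0}, Fil n u.1 →
          Fil (2 * n) ((χ u).1 - u.1)) ∧
      (∀ u : {f : PowerSeries B // coeff 0 f = 0},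
        expPS 𝕜 (hatR 𝕜 R (χ u).1) * expPS 𝕜 (-(lam • (χ u).1) - hatR 𝕜 R (χ u).1) =
          expPS 𝕜 (-(lam • u.1))) := by
  refine ⟨fun u => ⟨bchMap lam R u.1, coeff_zero_bchMap u.1⟩,
    ⟨fun n hn u hu => fil_bchMap_sub hlam hn hu,
      fun u => expPS_hatR_mul_expPS_neg_bchMap hRB hlam u.2⟩,
    fun χ hχ => funext fun u => Subtype.ext ?_⟩
  exact eq_of_expPS_hatR_mul_eq hRB hlam (χ u).2 (coeff_zero_bchMap u.1)
    ((hχ.2 u).trans (expPS_hatR_mul_expPS_neg_bchMap hRB hlam u.2).symm)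

theorem expPS_hatR_eq_one_add_X_mul (hlam : lam ≠ 0)
    (χ : {f : PowerSeries B // coeff 0 f = 0} → {f : PowerSeries B // coeff 0 f = 0})
    (hχ : ∀ u : {f : PowerSeries B // coeff 0 f = 0},
      expPS 𝕜 (hatR 𝕜 R (χ u).1) * expPS 𝕜 (-(lam • (χ u).1) - hatR 𝕜 R (χ u).1) =
        expPS 𝕜 (-(lam • u.1)))
    (a : B) (hu : coeff 0 (lam⁻¹ • logPS 𝕜 (1 + lam • (C a * X))) = 0) :
    expPS 𝕜 (hatR 𝕜 R (χ ⟨_, hu⟩).1) =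
      1 + X * hatR 𝕜 R (C a * expPS 𝕜 (hatR 𝕜 R (χ ⟨_, hu⟩).1)) := by
  have hφ : Fil 1 (C a * X : PowerSeries B) := fil_one_iff.mpr (by simp)
  have he : expPS 𝕜 (-(lam • lam⁻¹ • logPS 𝕜 (1 + lam • (C a * X)))) *
      (1 + lam • (C a * X)) = 1 := by
    have hC : lam • (C a * X : PowerSeries B) = C (lam • a) * X := by
      ext; simp [coeff_C_mul]
    rw [smul_inv_smul₀ hlam, hC]
    exact expPS_neg_logPS_one_add_mul (lam • a)
  have hb : (χ ⟨_, hu⟩).1 = bchSeries lam R (C a * X) :=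
    eq_of_expPS_hatR_mul_eq hRB hlam (χ _).2 (coeff_zero_bchSeries hφ)
      ((hχ _).trans (expPS_hatR_mul_expPS_neg_bchSeries hRB hφ he).symm)
  rw [hb, expPS_hatR_bchSeries hRB hφ, ← hatR_X_mul, ← mul_assoc, ← (commute_X (C a)).eq]
  exact spitzerSol_eq hφ

end SpitzerIdentity

end Spitzer

open Spitzer in
/-- non-commutative Spitzer identity. For a Rota–Baxter algebra `(A, R)` of
weight `lam ≠ 0` over a field `K` of characteristic zero, the power series ring `A⟦t⟧`, with
the filtration `Fil n = tⁿA⟦t⟧` and the coefficientwise extension `R̂` of `R`, is a complete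
filtered Rota–Baxter algebra of weight `lam`; there is a unique map
`χ_lam : tA⟦t⟧ → tA⟦t⟧` with `(χ_lam - id)(tⁿA⟦t⟧) ⊆ t²ⁿA⟦t⟧` and
`exp(R̂(χ_lam u)) * exp(R̃̂(χ_lam u)) = exp(-lam • u)`; and for every `a ∈ A` the element
`X := exp(R̂(χ_lam(lam⁻¹ • log(1 + lam·t·a))))` satisfies `X = 1 + t·R̂(a·X)`. -/
theorem noncommutative_spitzer_identity {K A : Type*} [Field K] [CharZero K]
    [Ring A] [Algebra K A] (lam : K) (hlam : lam ≠ 0) (R : A →ₗ[K] A)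
    (hRB : ∀ x y : A, R x * R y = R (R x * y + x * R y + lam • (x * y))) :
    -- the filtration `Fil n = tⁿA⟦t⟧`, described by vanishing of low coefficients
    let Fil : ℕ → PowerSeries A → Prop := fun n f => ∀ k < n, PowerSeries.coeff k f = 0
    -- `A⟦t⟧` is a complete filtered Rota–Baxter algebra of weight `lam`:
    ((∀ m n : ℕ, ∀ f g : PowerSeries A, Fil m f → Fil n g → Fil (m + n) (f * g)) ∧
     (∀ f : PowerSeries A, (∀ n : ℕ, Fil n f) → f = 0) ∧
     (∀ a : ℕ → PowerSeries A, (∀ n, Fil n (a n)) →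
        ∃ s : PowerSeries A, ∀ N : ℕ, Fil N (s - ∑ n ∈ Finset.range N, a n)) ∧
     (∀ n : ℕ, ∀ f : PowerSeries A, Fil n f → Fil n (hatR K R f)) ∧
     (∀ f g : PowerSeries A, hatR K R f * hatR K R g =
        hatR K R (hatR K R f * g + f * hatR K R g + lam • (f * g)))) ∧
    -- unique BCH-recursion map `χ_lam` on `tA⟦t⟧`
    (∃! χ : {f : PowerSeries A // PowerSeries.coeff 0 f = 0} →
             {f : PowerSeries A // PowerSeries.coeff 0 f = 0},
      (∀ n : ℕ, 1 ≤ n → ∀ u : {f : PowerSeries A // PowerSeries.coeff 0 f = 0}, Fil n u.1 →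
          Fil (2 * n) ((χ u).1 - u.1)) ∧
      (∀ u : {f : PowerSeries A // PowerSeries.coeff 0 f = 0},
        expPS K (hatR K R (χ u).1) *
          expPS K (-(lam • (χ u).1) - hatR K R (χ u).1) =
        expPS K (-(lam • u.1)))) ∧
    -- Spitzer identity for the BCH-recursion map
    (∀ χ : {f : PowerSeries A // PowerSeries.coeff 0 f = 0} →
            {f : PowerSeries A // PowerSeries.coeff 0 f = 0},
      (∀ n : ℕ, 1 ≤ n → ∀ u : {f : PowerSeries A // PowerSeries.coeff 0 f = 0}, Fil n u.1 →
          Fil (2 * n) ((χ u).1 - u.1)) →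
      (∀ u : {f : PowerSeries A // PowerSeries.coeff 0 f = 0},
        expPS K (hatR K R (χ u).1) *
          expPS K (-(lam • (χ u).1) - hatR K R (χ u).1) =
        expPS K (-(lam • u.1))) →
      ∀ a : A,
        expPS K (hatR K R (χ ⟨lam⁻¹ •
            logPS K (1 + lam • (PowerSeries.C a * PowerSeries.X)), by simp [logPS]⟩)) =
          1 + PowerSeries.X * hatR K R (PowerSeries.C a *
            expPS K (hatR K R (χ ⟨lam⁻¹ •
              logPS K (1 + lam • (PowerSeries.C a * PowerSeries.X)), by simp [logPS]⟩)))) := by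
  intro Fil
  exact ⟨⟨fun _ _ _ _ => Spitzer.Fil.mul, fun _ => eq_zero_of_forall_fil,
      fun _ => exists_fil_sub_sum, fun _ _ => Spitzer.Fil.hatR, hatR_mul_hatR hRB⟩,
    existsUnique_bchMap hRB hlam,
    fun χ _ hχ a => expPS_hatR_eq_one_add_X_mul hRB hlam χ hχ a _⟩
end

section
/- Let (A, R) be a Rota–Baxter algebra of weight 1 over a field K of characteristic zero, regard A as a Lie algebra under the commutator [x, y] = xy − yx, let U(A) be its universal enveloping algebra with canonical embedding ι : A → U(A), and for a ∈ A and Y ∈ U(A) write a ∗ Y := ι(a)·Y + ι(R(a))·Y − Y·ι(R(a)). Define the post-Lie Magnus coefficients of x ∈ A by χ^{(1)}(x) := ι(x) and, for n ≥ 2, χ^{(n)}(x) := ι(x)ⁿ/n! − Σ_{k=2}^{n} (1/k!) Σ_{p₁+⋯+p_k = n, pᵢ > 0} χ^{(p₁)}(x) ∗ ( χ^{(p₂)}(x) ∗ ( ⋯ ∗ χ^{(p_k)}(x) ) ), where each χ^{(p)}(x) lies in ι(A) so the products are defined by the formula above extended linearly in the left argument. Then, writing x ▷ y := R(x)y − yR(x)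 and [a, b] := ab − ba in A, one has χ^{(2)}(x) = −(1/2)·ι(x ▷ x) and χ^{(3)}(x) = ι( (1/4)·(x ▷ x) ▷ x + (1/12)·x ▷ (x ▷ x) + (1/12)·[x ▷ x, x] ). -/
attribute [local instance 100] LieRing.ofAssociativeRing

/-- Regard the ring `A` as a Lie algebra under the commutator; `ι` is the canonical embedding
into the universal enveloping algebra. -/
noncomputable abbrev ueι (K : Type*) {A : Type*} [Field K] [Ring A] [Algebra K A] :
    A →ₗ⁅K⁆ UniversalEnvelopingAlgebra K A :=
  UniversalEnvelopingAlgebra.ι K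

/-- The Grossman–Larson product `a ∗ Y = ι a · Y + ι (R a) · Y - Y · ι (R a)` of a primitive
element `ι a`, `a ∈ A`, with `Y ∈ U(A)`, for the post-Lie structure `x ▷ y = [R x, y]` of a
weight-one Rota–Baxter algebra `(A, R)`. -/
noncomputable def starA {K A : Type*} [Field K] [CharZero K] [Ring A] [Algebra K A]
    (R : A →ₗ[K] A) (a : A) (Y : UniversalEnvelopingAlgebra K A) :
    UniversalEnvelopingAlgebra K A :=
  ueι K a * Y + ueι K (R a) * Y - Y * ueι K (R a)

/-!
Since `ι` maps commutators to commutators, `a ∗ ι b = ι a · ι b + ι (a ▷ b)`. Expanding the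
recursion for `n = 2, 3` with this rule, the pure powers of `ι x` cancel against `ι(x)ⁿ/n!`, and
what remains is a combination of `ι`-images of post-Lie products and of one commutator. For the
third coefficient, `c 2` itself (not just `ι (c 2)`) is fed to `R`; it is recovered because `ι` is
injective on an associative algebra, the lift of the identity being a left inverse.
-/

section

variable {K A : Type*} [Field K] [Ring A] [Algebra K A]

theorem ueι_injective : Function.Injective (ueι K (A := A)) :=
  Function.LeftInverse.injective fun a =>
    UniversalEnvelopingAlgebra.lift_ι_apply K (LieHom.id : A →ₗ⁅K⁆ A) a

theorem ueι_commutator (a b : A) :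
    ueι K (a * b - b * a) = ueι K a * ueι K b - ueι K b * ueι K a := by
  simpa only [Ring.lie_def] using (ueι K (A := A)).map_lie a b

/-- The post-Lie product `a ▷ b = [R a, b]`. -/
def postLieProduct (R : A →ₗ[K] A) (a b : A) : A := R a * b - b * R a

theorem postLieProduct_smul_left (R : A →ₗ[K] A) (r : K) (a b : A) :
    postLieProduct R (r • a) b = r • postLieProduct R a b := by
  simp only [postLieProduct, map_smul, smul_mul_assoc, mul_smul_comm, smul_sub]

theorem postLieProduct_smul_right (R : A →ₗ[K] A) (r : K) (a b : A) :
    postLieProduct R a (r • b) = r • postLieProduct R a b := by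
  simp only [postLieProduct, smul_mul_assoc, mul_smul_comm, smul_sub]

variable [CharZero K] (R : A →ₗ[K] A)

theorem starA_one (a : A) : starA R a 1 = ueι K a := by
  simp only [starA, mul_one, one_mul, add_sub_cancel_right]

theorem starA_add_right (a : A) (Y Z : UniversalEnvelopingAlgebra K A) :
    starA R a (Y + Z) = starA R a Y + starA R a Z := by
  simp only [starA]
  noncomm_ring

theorem starA_ueι (a b : A) :
    starA R a (ueι K b) = ueι K a * ueι K b + ueι K (postLieProduct R a b) := by
  rw [starA, postLieProduct, ueι_commutator, add_sub_assoc]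

theorem starA_ueι_mul (a b b' : A) :
    starA R a (ueι K b * ueι K b') = ueι K a * (ueι K b * ueι K b') +
      (ueι K (postLieProduct R a b) * ueι K b' + ueι K b * ueι K (postLieProduct R a b')) := by
  simp only [starA, postLieProduct, ueι_commutator]
  noncomm_ring

/-- The sum subtracted from `ι(x)ⁿ/n!` in the recursion for the post-Lie Magnus coefficient
`χ^{(n)}(x) = ι (c n)`. -/
noncomputable def magnusCorrection (c : ℕ → A) (n : ℕ) : UniversalEnvelopingAlgebra K A :=
  ∑ k ∈ Finset.Icc 2 n, ((k.factorial : K)⁻¹) •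
    ∑ p ∈ (Finset.Nat.antidiagonalTuple k n).filter (fun p => ∀ i, p i ≠ 0),
      (List.ofFn fun i => c (p i)).foldr (starA R) 1

theorem magnusCorrection_two (c : ℕ → A) :
    magnusCorrection R c 2 = (2 : K)⁻¹ • starA R (c 1) (ueι K (c 1)) := by
  have hcomp : (Finset.Nat.antidiagonalTuple 2 2).filter (fun p => ∀ i, p i ≠ 0) = {![1, 1]} := by
    decide
  rw [magnusCorrection, Finset.Icc_self, Finset.sum_singleton, hcomp, Finset.sum_singleton]
  simp [starA_one, Nat.factorial]

theorem magnusCorrection_three (c : ℕ → A) :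
    magnusCorrection R c 3 =
      (2 : K)⁻¹ • (starA R (c 1) (ueι K (c 2)) + starA R (c 2) (ueι K (c 1))) +
        (6 : K)⁻¹ • starA R (c 1) (starA R (c 1) (ueι K (c 1))) := by
  have hcomp₂ : (Finset.Nat.antidiagonalTuple 2 3).filter (fun p => ∀ i, p i ≠ 0) =
      {![1, 2], ![2, 1]} := by
    decide
  have hcomp₃ : (Finset.Nat.antidiagonalTuple 3 3).filter (fun p => ∀ i, p i ≠ 0) =
      {![1, 1, 1]} := by
    decide
  have hIcc : Finset.Icc 2 3 = {2, 3} := by decide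
  rw [magnusCorrection, hIcc, Finset.sum_pair (by decide), hcomp₂, hcomp₃,
    Finset.sum_pair (by decide), Finset.sum_singleton]
  simp [starA_one, Nat.factorial]

theorem magnusCoeff_two {x : A} {c : ℕ → A} (hc1 : c 1 = x)
    (hc2 : ueι K (c 2) = ((2 : ℕ).factorial : K)⁻¹ • ueι K x ^ 2 - magnusCorrection R c 2) :
    ueι K (c 2) = -(2 : K)⁻¹ • ueι K (postLieProduct R x x) := by
  rw [hc2, magnusCorrection_two, hc1, starA_ueι, Nat.factorial_two, Nat.cast_ofNat, sq]
  module

theorem magnusCoeff_three {x : A} {c : ℕ → A} (hc1 : c 1 = x)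
    (hc2 : c 2 = -(2 : K)⁻¹ • postLieProduct R x x)
    (hc3 : ueι K (c 3) = ((3 : ℕ).factorial : K)⁻¹ • ueι K x ^ 3 - magnusCorrection R c 3) :
    ueι K (c 3) = ueι K ((4 : K)⁻¹ • postLieProduct R (postLieProduct R x x) x +
      (12 : K)⁻¹ • postLieProduct R x (postLieProduct R x x) +
      (12 : K)⁻¹ • (postLieProduct R x x * x - x * postLieProduct R x x)) := by
  rw [hc3, magnusCorrection_three, hc1, hc2]
  have h3 : ((3 : ℕ).factorial : K) = 6 := by norm_num [Nat.factorial]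
  simp only [starA_ueι, starA_add_right, starA_ueι_mul]
  simp only [h3, map_add, map_smul, postLieProduct_smul_left, postLieProduct_smul_right,
    ueι_commutator, smul_mul_assoc, mul_smul_comm, pow_succ, pow_zero, one_mul, mul_assoc]
  module

end

theorem post_lie_magnus_low_order_coefficients_general {K A : Type*} [Field K] [CharZero K]
    [Ring A] [Algebra K A] (R : A →ₗ[K] A)
    (x : A) (c : ℕ → A) (hc1 : c 1 = x)
    (hcrec : ∀ n : ℕ, 2 ≤ n →
      ueι K (c n) = ((n.factorial : K)⁻¹) • (ueι K x) ^ n -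
        ∑ k ∈ Finset.Icc 2 n, ((k.factorial : K)⁻¹) •
          ∑ p ∈ (Finset.Nat.antidiagonalTuple k n).filter (fun p => ∀ i, p i ≠ 0),
            (List.ofFn fun i => c (p i)).foldr (starA R) 1) :
    let trd : A → A → A := fun a b => R a * b - b * R a
    ueι K (c 2) = -((2 : K)⁻¹) • ueι K (trd x x) ∧
    ueι K (c 3) = ueι K (((4 : K)⁻¹) • trd (trd x x) x + ((12 : K)⁻¹) • trd x (trd x x)
      + ((12 : K)⁻¹) • (trd x x * x - x * trd x x)) := by
  have hcoeff₂ := magnusCoeff_two R hc1 (hcrec 2 le_rfl)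
  have hc₂ : c 2 = -(2 : K)⁻¹ • postLieProduct R x x :=
    ueι_injective (by rw [hcoeff₂, map_smul])
  exact ⟨hcoeff₂, magnusCoeff_three R hc1 hc₂ (hcrec 3 (by norm_num))⟩

/-- Let `(A, R)` be a Rota–Baxter algebra of weight `1` over a field `K` of
characteristic zero and `x ∈ A`. Let `c n ∈ A` represent the post-Lie Magnus coefficients
`χ^{(n)}(x) = ι (c n)` (each lies in `ι(A)`), determined by `c 1 = x` and, for `n ≥ 2`,
`ι (c n) = ι(x)ⁿ/n! - Σ_{k=2}^{n} (1/k!) Σ_{p₁+⋯+p_k=n, pᵢ>0}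
  χ^{(p₁)}(x) ∗ (χ^{(p₂)}(x) ∗ (⋯ ∗ χ^{(p_k)}(x)))`,
the nested products being taken with the Grossman–Larson product of primitive elements
(note `a ∗ 1 = ι a`, so the nested product is a fold of `∗` ending at `1`). Then
`χ^{(2)}(x) = -(1/2)·ι(x ▷ x)` and
`χ^{(3)}(x) = ι((1/4)·(x ▷ x) ▷ x + (1/12)·x ▷ (x ▷ x) + (1/12)·[x ▷ x, x])`,
where `x ▷ y = R(x)y - yR(x)` and `[a, b] = ab - ba` in `A`. -/
theorem post_lie_magnus_low_order_coefficients {K A : Type*} [Field K] [CharZero K]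
    [Ring A] [Algebra K A] (R : A →ₗ[K] A)
    (hRB : ∀ x y : A, R x * R y = R (R x * y + x * R y + x * y))
    (x : A) (c : ℕ → A) (hc1 : c 1 = x)
    (hcrec : ∀ n : ℕ, 2 ≤ n →
      ueι K (c n) = ((n.factorial : K)⁻¹) • (ueι K x) ^ n -
        ∑ k ∈ Finset.Icc 2 n, ((k.factorial : K)⁻¹) •
          ∑ p ∈ (Finset.Nat.antidiagonalTuple k n).filter (fun p => ∀ i, p i ≠ 0),
            (List.ofFn fun i => c (p i)).foldr (starA R) 1) :
    let trd : A → A → A := fun a b => R a * b - b * R a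
    ueι K (c 2) = -((2 : K)⁻¹) • ueι K (trd x x) ∧
    ueι K (c 3) = ueι K (((4 : K)⁻¹) • trd (trd x x) x + ((12 : K)⁻¹) • trd x (trd x x)
      + ((12 : K)⁻¹) • (trd x x * x - x * trd x x)) :=
  post_lie_magnus_low_order_coefficients_general R x c hc1 hcrec
end
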